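/- arXiv:2308.15436 — 11 statements merged into one kernel-verified Lean document; each statement's English description precedes it below -/
import Mathlib

section
/- Let V be a finite-dimensional real vector space and let R be a 4-covariant tensor on V with the symmetries of a Riemann curvature tensor (antisymmetric in the first pair, antisymmetric in the second pair, symmetric under interchange of the two pairs, and satisfying the first Bianchi identity). If ω is a nonzero linear functional on V such that ω_{[γ} R_{αβ]λμ} = 0 (antisymmetrization over γ, α, β), then there exists a symmetric bilinear form Q on V such that R_{αβλμ} = ω_α Q_{βλ} ω_μ − ω_β Q_{αλ} ω_μ − ω_α Q_{βμ} ω_λ + ω_β Q_{αμ} ω_λ. -/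
open scoped BigOperators

/-- `R : ⊗⁴V* ` (in components w.r.t. a basis of the finite-dimensional real vector
space `V ≃ ℝⁿ`) has the algebraic symmetries of a Riemann curvature tensor:
antisymmetry in the first pair, antisymmetry in the second pair, symmetry under
interchange of the two pairs, and the first Bianchi identity. -/
def IsRiemannTensor (n : ℕ) (R : Fin n → Fin n → Fin n → Fin n → ℝ) : Prop :=
  (∀ a b l m, R a b l m = - R b a l m) ∧
  (∀ a b l m, R a b l m = - R a b m l) ∧
  (∀ a b l m, R a b l m = R l m a b) ∧
  (∀ a b l m, R a b l m + R a l m b + R a m b l = 0)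

/-- If `ω ≠ 0` satisfies `ω_{[γ}R_{αβ]λμ} = 0`, then
`R_{αβλμ} = ω_α Q_{βλ} ω_μ − ω_β Q_{αλ} ω_μ − ω_α Q_{βμ} ω_λ + ω_β Q_{αμ} ω_λ`
for some symmetric bilinear form `Q`. -/
theorem stmt0 (n : ℕ) (R : Fin n → Fin n → Fin n → Fin n → ℝ)
    (hR : IsRiemannTensor n R) (ω : Fin n → ℝ) (hω : ω ≠ 0)
    (h : ∀ γ α β l m, ω γ * R α β l m + ω α * R β γ l m + ω β * R γ α l m = 0) :
    ∃ Q : Fin n → Fin n → ℝ, (∀ a b, Q a b = Q b a) ∧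
      ∀ α β l m, R α β l m =
        ω α * Q β l * ω m - ω β * Q α l * ω m - ω α * Q β m * ω l + ω β * Q α m * ω l := by
  obtain ⟨h1, h2, hp, hb⟩ := hR
  obtain ⟨c, hc⟩ := Function.ne_iff.mp hω
  simp only [Pi.zero_apply] at hc
  have key : ∀ a b l m, ω c * R a b l m = ω a * R c b l m - ω b * R c a l m := by
    intro a b l m
    have hh := h c a b l m
    have hbc := h1 b c l m
    linear_combination hh - ω a * hbc
  have hc2 : ω c * ω c ≠ 0 := mul_ne_zero hc hc
  refine ⟨fun a b => -R c a c b / (ω c * ω c), fun a b => by dsimp only; rw [hp c a c b], ?_⟩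
  intro α β l m
  have e1 := key α β l m
  have e2 := key l m c β
  have e3 := key l m c α
  have p1 := hp c β l m
  have p2 := hp c α l m
  have q1 := hp c l c β
  have q2 := hp c m c β
  have q3 := hp c l c α
  have q4 := hp c m c α
  have main : ω c * ω c * R α β l m =
      ω α * ω l * R c m c β - ω α * ω m * R c l c β
      - ω β * ω l * R c m c α + ω β * ω m * R c l c α := by
    linear_combination ω c * e1 + ω α * ω c * p1 + ω α * e2 - ω β * ω c * p2 - ω β * e3
  dsimp only
  apply mul_left_cancel₀ hc2
  field_simp
  linear_combination 1 * main - 1 * ω α * ω m * q1 + 1 * ω α * ω l * q2 + 1 * ω β * ω m * q3 - 1 * ω β * ω l * q4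
end

section
/- Let V be a finite-dimensional real vector space and R a tensor with Riemann curvature symmetries on V. If ω and ρ are two linearly independent linear functionals on V such that R_{αβ[λμ}ω_{ν]} = 0 and R_{αβ[λμ}ρ_{ν]} = 0, then there exists a real scalar A such that R = A·F⊗F where F = ω∧ρ is the 2-form ω⊗ρ − ρ⊗ω; explicitly R_{αβλμ} = A (ω_α ρ_β − ω_β ρ_α)(ρ_λ ω_μ − ρ_μ ω_λ). -/
open scoped BigOperators

/-- If `ω` and `ρ` are two linearly independent linear functionals with
`R_{αβ[λμ}ω_{ν]} = 0` and `R_{αβ[λμ}ρ_{ν]} = 0`, then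
`R_{αβλμ} = A (ω_α ρ_β − ω_β ρ_α)(ρ_λ ω_μ − ρ_μ ω_λ)` for some scalar `A`,
i.e. `R = A · F ⊗ F` with `F = ω ∧ ρ`. -/
theorem stmt1 (n : ℕ) (R : Fin n → Fin n → Fin n → Fin n → ℝ)
    (hR : IsRiemannTensor n R) (ω ρ : Fin n → ℝ)
    (hind : LinearIndependent ℝ ![ω, ρ])
    (hω : ∀ α β l m v, R α β l m * ω v + R α β m v * ω l + R α β v l * ω m = 0)
    (hρ : ∀ α β l m v, R α β l m * ρ v + R α β m v * ρ l + R α β v l * ρ m = 0) :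
    ∃ A : ℝ, ∀ α β l m,
      R α β l m = A * (ω α * ρ β - ω β * ρ α) * (ρ l * ω m - ρ m * ω l) := by
  obtain ⟨hanti1, hanti2, hpair, hbianchi⟩ := hR
  -- find a nonvanishing 2x2 minor
  have hminor : ∃ i j, ω i * ρ j - ω j * ρ i ≠ 0 := by
    by_contra h
    push_neg at h
    rw [LinearIndependent.pair_iff] at hind
    by_cases hω0 : ω = 0
    · exact one_ne_zero (hind 1 0 (by simp [hω0])).1
    · obtain ⟨k, hk⟩ := Function.ne_iff.mp hω0
      have hzero : (ρ k) • ω + (-(ω k)) • ρ = 0 := by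
        funext m
        have := h m k
        simp only [Pi.add_apply, Pi.smul_apply, smul_eq_mul, Pi.zero_apply]
        nlinarith [h m k]
      have := (hind (ρ k) (-(ω k)) hzero).2
      exact hk (by simpa using neg_eq_zero.mp this)
  obtain ⟨i, j, hD⟩ := hminor
  set D : ℝ := ω i * ρ j - ω j * ρ i with hDdef
  -- Step A : reduce to last-index i
  have stepA : ∀ a b m, R a b m i * D = R a b i j * (ω m * ρ i - ρ m * ω i) := by
    intro a b m
    have h1 := hω a b m i j
    have h2 := hρ a b m i j
    linear_combination (-(ρ i)) * h1 + (ω i) * h2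
  have stepB : ∀ a b m, R a b m j * D = R a b i j * (ω m * ρ j - ρ m * ω j) := by
    intro a b m
    have h1 := hω a b m j i
    have h2 := hρ a b m j i
    have h3 : R a b j i = - R a b i j := by
      have := hanti2 a b i j; linarith
    linear_combination (ρ j) * h1 - (ω j) * h2 - (ω m * ρ j - ρ m * ω j) * h3
  -- Key reduction
  have key : ∀ a b l m, R a b l m * (2 * D * D) =
      R a b i j * ((ω l * ρ m - ρ l * ω m) * (2 * D)) := by
    intro a b l m
    have h1 := hω a b l m i
    have h2 := hω a b l m j
    have h3 := hρ a b l m i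
    have h4 := hρ a b l m j
    have s1 := stepA a b l
    have s2 := stepA a b m
    have s3 := stepB a b l
    have s4 := stepB a b m
    have hli : R a b i l = - R a b l i := by
      have := hanti2 a b l i; linarith
    have hlj : R a b j l = - R a b l j := by
      have := hanti2 a b l j; linarith
    linear_combination (D * ρ j) * h1 - (D * ρ i) * h2 - (D * ω j) * h3 + (D * ω i) * h4
      - (D * (ω m * ρ j - ρ m * ω j)) * hli + (D * (ω m * ρ i - ρ m * ω i)) * hlj
      - (ω l * ρ j - ρ l * ω j) * s2 + (ω m * ρ j - ρ m * ω j) * s1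
      + (ω l * ρ i - ρ l * ω i) * s4 - (ω m * ρ i - ρ m * ω i) * s3
  -- cancel one factor of D
  have key' : ∀ a b l m, R a b l m * D = R a b i j * (ω l * ρ m - ρ l * ω m) := by
    intro a b l m
    have hk := key a b l m
    have h2 : (R a b l m * D - R a b i j * (ω l * ρ m - ρ l * ω m)) * (2 * D) = 0 := by
      ring_nf
      ring_nf at hk
      linarith
    have h2D : (2 : ℝ) * D ≠ 0 := by
      intro h; apply hD; linarith
    have := mul_eq_zero.mp h2
    rcases this with h | h
    · linarith
    · exact absurd h h2D
  refine ⟨-(R i j i j) / (D * D), fun α β l m => ?_⟩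
  have k1 := key' α β l m
  have k2 := key' i j α β
  have hp : R α β i j = R i j α β := hpair α β i j
  have hD2 : D * D ≠ 0 := mul_ne_zero hD hD
  field_simp
  -- R α β l m * (D*D) = -(R i j i j) * (ω α ρ β - ω β ρ α) * (ρ l ω m - ρ m ω l) ... up to form
  linear_combination D * k1 + (ω l * ρ m - ρ l * ω m) * k2
    + (ω l * ρ m - ρ l * ω m) * D * hp
end

section
/- Let V be a finite-dimensional real vector space and R a nonzero tensor with Riemann curvature symmetries on V. Then the set L of linear functionals ω ∈ V* satisfying ω_{[γ}R_{αβ]λμ} = 0 is a linear subspace of V* of dimension at most 2. -/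
open scoped BigOperators

/-- For a nonzero tensor `R` with Riemann symmetries, the set
`L = {ω ∈ V* : ω_{[γ}R_{αβ]λμ} = 0}` is a linear subspace of `V*` of dimension at most 2. -/
theorem stmt2 (n : ℕ) (R : Fin n → Fin n → Fin n → Fin n → ℝ)
    (hR : IsRiemannTensor n R) (hR0 : R ≠ 0) :
    ∃ L : Submodule ℝ (Fin n → ℝ),
      (↑L = {ω : Fin n → ℝ |
        ∀ γ α β l m, ω γ * R α β l m + ω α * R β γ l m + ω β * R γ α l m = 0}) ∧
      Module.finrank ℝ L ≤ 2 := by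
  classical
  obtain ⟨h1, h2, h3, h4⟩ := hR
  set S : Set (Fin n → ℝ) := {ω : Fin n → ℝ |
      ∀ γ α β l m, ω γ * R α β l m + ω α * R β γ l m + ω β * R γ α l m = 0} with hSdef
  -- key claim: everything in S lies in the span of two fixed vectors
  have main : ∃ v w : Fin n → ℝ, ∀ ρ ∈ S, ρ ∈ Submodule.span ℝ ({v, w} : Set (Fin n → ℝ)) := by
    by_cases hcase : ∃ ω ∈ S, ∃ θ ∈ S, ∃ p q, ω p * θ q - ω q * θ p ≠ 0
    · obtain ⟨ω, hω, θ, hθ, p, q, hd⟩ := hcase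
      refine ⟨ω, θ, ?_⟩
      have star : ∀ γ α β l m, (θ γ * ω α - ω γ * θ α) * R β γ l m +
          (θ γ * ω β - ω γ * θ β) * R γ α l m = 0 := by
        intro γ α β l m
        linear_combination θ γ * hω γ α β l m - ω γ * hθ γ α β l m
      have eq1 : ∀ β l m, (ω p * θ q - ω q * θ p) * R β p l m =
          (θ p * ω β - ω p * θ β) * R p q l m := by
        intro β l m
        linear_combination - star p q β l m
      have hM : ∀ α β l m, (ω p * θ q - ω q * θ p) * R α β l m =
          (ω α * θ β - ω β * θ α) * R p q l m := by
        intro α β l m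
        have key : (ω p * θ q - ω q * θ p) * ((ω p * θ q - ω q * θ p) * R α β l m -
            (ω α * θ β - ω β * θ α) * R p q l m) = 0 := by
          linear_combination (θ q * (ω p * θ q - ω q * θ p)) * hω p α β l m
            - (ω q * (ω p * θ q - ω q * θ p)) * hθ p α β l m
            + (ω q * θ α - θ q * ω α) * eq1 β l m
            + (θ q * ω β - ω q * θ β) * eq1 α l m
            + ((ω q * θ β - θ q * ω β) * (ω p * θ q - ω q * θ p)) * h1 p α l m
        have h5 := (mul_eq_zero.mp key).resolve_left hd
        linarith
      have hM2 : ∀ α β l m, (ω p * θ q - ω q * θ p) * ((ω p * θ q - ω q * θ p) * R α β l m) =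
          (ω α * θ β - ω β * θ α) * ((ω l * θ m - ω m * θ l) * R p q p q) := by
        intro α β l m
        linear_combination (ω p * θ q - ω q * θ p) * hM α β l m
          + (ω α * θ β - ω β * θ α) * hM l m p q
          + ((ω α * θ β - ω β * θ α) * (ω p * θ q - ω q * θ p)) * h3 p q l m
      have hc : R p q p q ≠ 0 := by
        intro hc0
        apply hR0
        funext α β l m
        have h6 := hM2 α β l m
        rw [hc0] at h6
        have h7 : (ω p * θ q - ω q * θ p) * ((ω p * θ q - ω q * θ p) * R α β l m) = 0 := by
          linarith
        have h8 := (mul_eq_zero.mp h7).resolve_left hd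
        have h9 := (mul_eq_zero.mp h8).resolve_left hd
        simpa using h9
      intro ρ hρ
      rw [Submodule.mem_span_pair]
      refine ⟨(ρ p * θ q - ρ q * θ p) / (ω p * θ q - ω q * θ p),
        (ρ q * ω p - ρ p * ω q) / (ω p * θ q - ω q * θ p), ?_⟩
      funext γ
      have key2 : R p q p q * ((ω p * θ q - ω q * θ p) * ((ω p * θ q - ω q * θ p) * ρ γ -
          ((ρ p * θ q - ρ q * θ p) * ω γ + (ρ q * ω p - ρ p * ω q) * θ γ))) = 0 := by
        linear_combination ((ω p * θ q - ω q * θ p) * (ω p * θ q - ω q * θ p)) * hρ γ p q p q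
          - ρ p * hM2 q γ p q - ρ q * hM2 γ p p q
      have h5 := (mul_eq_zero.mp key2).resolve_left hc
      have h6 := (mul_eq_zero.mp h5).resolve_left hd
      simp only [Pi.add_apply, Pi.smul_apply, smul_eq_mul]
      field_simp
      have hd' : θ q * ω p - θ p * ω q ≠ 0 := by intro h; apply hd; linarith
      field_simp
      linarith
    · push_neg at hcase
      by_cases h0 : ∀ ρ ∈ S, ρ = (0 : Fin n → ℝ)
      · exact ⟨0, 0, fun ρ hρ => by rw [h0 ρ hρ]; exact Submodule.zero_mem _⟩
      · push_neg at h0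
        obtain ⟨ω, hωS, hω0⟩ := h0
        have hi : ∃ i, ω i ≠ 0 := by
          by_contra h
          push_neg at h
          exact hω0 (funext fun j => h j)
        obtain ⟨i, hi⟩ := hi
        refine ⟨ω, 0, fun ρ hρ => ?_⟩
        rw [Submodule.mem_span_pair]
        refine ⟨ρ i / ω i, 0, ?_⟩
        funext j
        have hpar := hcase ω hωS ρ hρ i j
        simp only [Pi.add_apply, Pi.smul_apply, smul_eq_mul, Pi.zero_apply, mul_zero,
          zero_mul, add_zero]
        field_simp
        linarith
  have addS : ∀ {a b : Fin n → ℝ}, a ∈ S → b ∈ S → a + b ∈ S := by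
    intro a b ha hb γ α β l m
    have h5 := ha γ α β l m
    have h6 := hb γ α β l m
    simp only [Pi.add_apply]
    linarith
  have zeroS : (0 : Fin n → ℝ) ∈ S := by
    intro γ α β l m
    simp
  have smulS : ∀ (c : ℝ) {a : Fin n → ℝ}, a ∈ S → c • a ∈ S := by
    intro c a ha γ α β l m
    simp only [Pi.smul_apply, smul_eq_mul]
    linear_combination c * ha γ α β l m
  let L' : Submodule ℝ (Fin n → ℝ) :=
    { carrier := S
      add_mem' := addS
      zero_mem' := zeroS
      smul_mem' := smulS }
  refine ⟨L', rfl, ?_⟩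
  obtain ⟨v, w, hvw⟩ := main
  have hle : L' ≤ Submodule.span ℝ ({v, w} : Set (Fin n → ℝ)) := fun x hx => hvw x hx
  refine le_trans (Submodule.finrank_mono hle) ?_
  refine le_trans (finrank_span_le_card _) ?_
  simp only [Set.toFinset_insert, Set.toFinset_singleton]
  exact le_trans (Finset.card_insert_le _ _) (by simp)
end

section
/- Let V be a finite-dimensional real vector space, T a nonzero symmetric bilinear form on V, and R a nonzero tensor with the symmetries of a Riemann curvature tensor on V, regarded as a symmetric bilinear form on Λ²V. If the completely symmetrized product of T (viewed via collective antisymmetric index pairs) with R vanishes, i.e. T_{α₁α₂} R_{β₁β₂λ₁λ₂} + T_{β₁β₂} R_{λ₁λ₂α₁α₂} + T_{λ₁λ₂} R_{α₁α₂β₁β₂} = 0 where T is antisymmetric in each of its index pairs, then T = 0 or R = 0. Consequently if R ≠ 0 then T = 0. -/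
open scoped BigOperators

/-- If `T` is antisymmetric in its index pair (a 2-form, i.e. a collective index on
`W = Λ²V`) and `R` has Riemann symmetries (a symmetric bilinear form on `W`), and the
completely symmetrized product vanishes,
`T_{α₁α₂} R_{β₁β₂λ₁λ₂} + T_{β₁β₂} R_{λ₁λ₂α₁α₂} + T_{λ₁λ₂} R_{α₁α₂β₁β₂} = 0`,
then `T = 0` or `R = 0` (so if `R ≠ 0` then `T = 0`). -/
theorem stmt3 (n : ℕ) (R : Fin n → Fin n → Fin n → Fin n → ℝ)
    (hR : IsRiemannTensor n R) (T : Fin n → Fin n → ℝ)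
    (hT : ∀ a b, T a b = - T b a)
    (h : ∀ a₁ a₂ b₁ b₂ l₁ l₂,
      T a₁ a₂ * R b₁ b₂ l₁ l₂ + T b₁ b₂ * R l₁ l₂ a₁ a₂ + T l₁ l₂ * R a₁ a₂ b₁ b₂ = 0) :
    T = 0 ∨ R = 0 := by
  obtain ⟨hR1, hR2, hR3, hR4⟩ := hR
  by_cases hT0 : T = 0
  · exact Or.inl hT0
  right
  obtain ⟨a, ha⟩ := Function.ne_iff.mp hT0
  obtain ⟨b, hab⟩ := Function.ne_iff.mp ha
  simp only [Pi.zero_apply] at hab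
  -- R a b a b = 0
  have hAA : R a b a b = 0 := by
    have h1 := h a b a b a b
    have h2 : (3 : ℝ) * (T a b * R a b a b) = 0 := by linarith
    have h3 : T a b * R a b a b = 0 := by linarith
    exact (mul_eq_zero.mp h3).resolve_left hab
  -- R a b c d = 0 for all c d
  have hAB : ∀ c d, R a b c d = 0 := by
    intro c d
    have h1 := h a b a b c d
    rw [hR3 c d a b, hAA] at h1
    have h3 : T a b * R a b c d = 0 := by linarith
    exact (mul_eq_zero.mp h3).resolve_left hab
  -- general vanishing
  funext c d e f
  have h1 := h a b c d e f
  rw [hR3 e f a b, hAB c d, hAB e f] at h1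
  have h3 : T a b * R c d e f = 0 := by linarith
  exact (mul_eq_zero.mp h3).resolve_left hab
end

section
/- Let (V, g) be a finite-dimensional real vector space with a (possibly indefinite) nondegenerate symmetric bilinear form, and let R be a tensor with Riemann curvature symmetries on V. Suppose ω ∈ V* satisfies ω_{[γ}R_{αβ]λμ} = 0. Then contracting with g gives: (1) ω_ρ R^ρ_{αβλ} = R_{αλ}ω_β − R_{αβ}ω_λ where R_{αβ} is the Ricci contraction of R; (2) ω^ρ R_{ρα} = (S/2) ω_α where S is the scalar curvature (double trace of R); and (3) the Gauss–Bonnet scalar vanishes: R^{αβλμ}R_{αβλμ} − 4 R^{αβ}R_{αβ} + S² = 0, provided ω ≠ 0. -/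
open scoped BigOperators
open Matrix

private lemma sum3_rot {n : ℕ} (f : Fin n → Fin n → Fin n → ℝ) :
    ∑ a, ∑ b, ∑ l, f a b l = ∑ b, ∑ l, ∑ a, f a b l := by
  rw [Finset.sum_comm]
  exact Finset.sum_congr rfl fun b _ => Finset.sum_comm

private lemma sum4_rot {n : ℕ} (f : Fin n → Fin n → Fin n → Fin n → ℝ) :
    ∑ a, ∑ b, ∑ l, ∑ m, f a b l m = ∑ b, ∑ l, ∑ m, ∑ a, f a b l m := by
  rw [Finset.sum_comm]
  exact Finset.sum_congr rfl fun b _ => by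
    rw [Finset.sum_comm]
    exact Finset.sum_congr rfl fun l _ => Finset.sum_comm

private lemma pull3 {n : ℕ} (u : Fin n → ℝ) (c : Fin n → Fin n → Fin n → ℝ)
    (f : Fin n → Fin n → Fin n → Fin n → ℝ) :
    ∑ p, u p * (∑ q, ∑ r, ∑ s, c q r s * f p q r s)
    = ∑ q, ∑ r, ∑ s, c q r s * (∑ p, u p * f p q r s) := by
  calc ∑ p, u p * (∑ q, ∑ r, ∑ s, c q r s * f p q r s)
      = ∑ p, ∑ q, ∑ r, ∑ s, u p * (c q r s * f p q r s) := by
        simp only [Finset.mul_sum]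
    _ = ∑ q, ∑ r, ∑ s, ∑ p, u p * (c q r s * f p q r s) := sum4_rot _
    _ = ∑ q, ∑ r, ∑ s, c q r s * (∑ p, u p * f p q r s) := by
        refine Finset.sum_congr rfl fun q _ => Finset.sum_congr rfl fun r _ =>
          Finset.sum_congr rfl fun s _ => ?_
        rw [Finset.mul_sum]
        exact Finset.sum_congr rfl fun p _ => by ring

/-- The Ricci contraction `Ric_{αβ} = g^{ρσ} R_{ρασβ}`. -/
def Ricci (n : ℕ) (ginv : Fin n → Fin n → ℝ) (R : Fin n → Fin n → Fin n → Fin n → ℝ)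
    (a b : Fin n) : ℝ :=
  ∑ p, ∑ q, ginv p q * R p a q b

/-- The scalar curvature `S = g^{αβ} Ric_{αβ}`. -/
def Scal (n : ℕ) (ginv : Fin n → Fin n → ℝ) (R : Fin n → Fin n → Fin n → Fin n → ℝ) : ℝ :=
  ∑ a, ∑ b, ginv a b * Ricci n ginv R a b

/-- Let `(V,g)` be finite dimensional with nondegenerate symmetric `g` (with inverse
`ginv`), and `R` a Riemann-symmetric tensor with `ω_{[γ}R_{αβ]λμ} = 0`.  Then
(1) `ω_ρ R^ρ_{αβλ} = Ric_{αλ}ω_β − Ric_{αβ}ω_λ`;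
(2) `ω^ρ Ric_{ρα} = (S/2) ω_α`;
(3) if `ω ≠ 0`, the Gauss–Bonnet scalar vanishes:
`R^{αβλμ}R_{αβλμ} − 4 Ric^{αβ}Ric_{αβ} + S² = 0`. -/
theorem stmt4 (n : ℕ) (g ginv : Fin n → Fin n → ℝ)
    (hgsymm : ∀ a b, g a b = g b a)
    (hginv : ∀ a b, (∑ p, g a p * ginv p b) = if a = b then 1 else 0)
    (R : Fin n → Fin n → Fin n → Fin n → ℝ) (hR : IsRiemannTensor n R)
    (ω : Fin n → ℝ)
    (h : ∀ γ α β l m, ω γ * R α β l m + ω α * R β γ l m + ω β * R γ α l m = 0) :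
    (∀ α β l, (∑ p, ∑ t, ω p * ginv p t * R t α β l) =
        Ricci n ginv R α l * ω β - Ricci n ginv R α β * ω l) ∧
    (∀ α, (∑ p, ∑ t, ginv p t * ω p * Ricci n ginv R t α) =
        Scal n ginv R / 2 * ω α) ∧
    (ω ≠ 0 →
      (∑ a, ∑ b, ∑ l, ∑ m,
          (∑ p, ∑ q, ∑ r, ∑ s,
            ginv a p * ginv b q * ginv l r * ginv m s * R p q r s) * R a b l m)
        - 4 * (∑ a, ∑ b,
            (∑ p, ∑ q, ginv a p * ginv b q * Ricci n ginv R p q) * Ricci n ginv R a b)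
        + Scal n ginv R ^ 2 = 0) := by
  obtain ⟨h1, h2, h3, h4⟩ := hR
  -- symmetry of the inverse metric
  have hgi : ∀ a b, ginv a b = ginv b a := by
    have hG : (Matrix.of g) * (Matrix.of ginv) = 1 := by
      ext a b
      simpa [Matrix.mul_apply, Matrix.one_apply] using hginv a b
    have hsymG : (Matrix.of g)ᵀ = Matrix.of g := by
      ext a b; exact hgsymm b a
    have hG1 : (Matrix.of ginv)ᵀ * (Matrix.of g) = 1 := by
      have := congrArg Matrix.transpose hG
      rw [Matrix.transpose_mul, hsymG] at this
      simpa using this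
    have hfin : (Matrix.of ginv)ᵀ = Matrix.of ginv := by
      calc (Matrix.of ginv)ᵀ = (Matrix.of ginv)ᵀ * ((Matrix.of g) * Matrix.of ginv) := by
            rw [hG, Matrix.mul_one]
        _ = ((Matrix.of ginv)ᵀ * Matrix.of g) * Matrix.of ginv := by rw [Matrix.mul_assoc]
        _ = Matrix.of ginv := by rw [hG1, Matrix.one_mul]
    intro a b
    have := congrFun (congrFun hfin b) a
    simpa [Matrix.transpose_apply] using this
  -- symmetry of Ricci
  have hRicS : ∀ a b, Ricci n ginv R a b = Ricci n ginv R b a := by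
    intro a b
    unfold Ricci
    rw [Finset.sum_comm]
    refine Finset.sum_congr rfl fun q _ => Finset.sum_congr rfl fun p _ => ?_
    rw [hgi, h3]
  -- key contraction: ω^l R_{ab l m} = ω_a Ric_{bm} - ω_b Ric_{am}
  have key : ∀ a b m, (∑ p, ∑ l, ginv p l * (ω p * R a b l m))
      = ω a * Ricci n ginv R b m - ω b * Ricci n ginv R a m := by
    intro a b m
    have e0 : (∑ p, ∑ l, ginv p l *
        (ω p * R a b l m + ω a * R b p l m + ω b * R p a l m)) = 0 := by
      simp [h]
    have e1 : (∑ p, ∑ l, ginv p l *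
        (ω p * R a b l m + ω a * R b p l m + ω b * R p a l m))
        = (∑ p, ∑ l, ginv p l * (ω p * R a b l m))
          + (ω a * ∑ p, ∑ l, -(ginv p l * R p b l m))
          + (ω b * ∑ p, ∑ l, ginv p l * R p a l m) := by
      have pt : ∀ p l : Fin n,
          ginv p l * (ω p * R a b l m + ω a * R b p l m + ω b * R p a l m)
          = ginv p l * (ω p * R a b l m) + ω a * -(ginv p l * R p b l m)
            + ω b * (ginv p l * R p a l m) := by
        intro p l; rw [h1 b p l m]; ring
      simp only [pt, Finset.sum_add_distrib, Finset.mul_sum]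
    rw [e1] at e0
    have hrb : (∑ p, ∑ l, -(ginv p l * R p b l m)) = -Ricci n ginv R b m := by
      simp [Ricci]
    have hra : (∑ p, ∑ l, ginv p l * R p a l m) = Ricci n ginv R a m := rfl
    rw [hrb, hra] at e0
    linarith
  -- the key with the sum reorganized: ou l := ω^l
  set ou : Fin n → ℝ := fun t => ∑ p, ginv p t * ω p with hou
  have key1 : ∀ a b m, (∑ l, ou l * R a b l m)
      = ω a * Ricci n ginv R b m - ω b * Ricci n ginv R a m := by
    intro a b m
    have e0 : (∑ p, ∑ l, ginv p l * (ω p * R a b l m))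
        = ∑ l, ∑ p, ginv p l * (ω p * R a b l m) := Finset.sum_comm
    rw [← key a b m, e0]
    refine Finset.sum_congr rfl fun l _ => ?_
    simp only [hou, Finset.sum_mul]
    exact Finset.sum_congr rfl fun p _ => by ring
  have key0 : ∀ q r s, (∑ p, ou p * R p q r s)
      = ω r * Ricci n ginv R s q - ω s * Ricci n ginv R r q := by
    intro q r s
    rw [← key1 r s q]
    refine Finset.sum_congr rfl fun p _ => ?_
    rw [h3]
  -- Part (1)
  have part1 : ∀ α β l, (∑ p, ∑ t, ω p * ginv p t * R t α β l) =
      Ricci n ginv R α l * ω β - Ricci n ginv R α β * ω l := by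
    intro α β l
    have : (∑ p, ∑ t, ω p * ginv p t * R t α β l)
        = ∑ p, ∑ t, ginv p t * (ω p * R β l t α) := by
      refine Finset.sum_congr rfl fun p _ => Finset.sum_congr rfl fun t _ => ?_
      rw [h3 t α β l]; ring
    rw [this, key β l α, hRicS l α, hRicS β α]
    ring
  -- Part (2)
  have part2 : ∀ α, (∑ p, ∑ t, ginv p t * ω p * Ricci n ginv R t α) =
      Scal n ginv R / 2 * ω α := by
    intro α
    set L : ℝ := ∑ p, ∑ t, ginv p t * ω p * Ricci n ginv R t α with hL
    -- inner contraction lemma: ∑_{b,m} ginv b m R a b l m = Ric l a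
    have hin : ∀ a l, (∑ b, ∑ m, ginv b m * R a b l m) = Ricci n ginv R l a := by
      intro a l
      rw [Ricci, Finset.sum_comm]
      refine Finset.sum_congr rfl fun m _ => Finset.sum_congr rfl fun b _ => ?_
      rw [hgi b m, h3 a b l m, h1 l m a b, h2 m l a b]
      ring
    -- T computed two ways
    have hT1 : (∑ b, ∑ m, ginv b m * (∑ p, ∑ l, ginv p l * (ω p * R α b l m)))
        = ω α * Scal n ginv R - L := by
      have : (∑ b, ∑ m, ginv b m * (∑ p, ∑ l, ginv p l * (ω p * R α b l m)))
          = ∑ b, ∑ m, (ω α * (ginv b m * Ricci n ginv R b m)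
              - ginv b m * ω b * Ricci n ginv R m α) := by
        refine Finset.sum_congr rfl fun b _ => Finset.sum_congr rfl fun m _ => ?_
        rw [key α b m, hRicS α m]
        ring
      rw [this]
      simp only [Finset.sum_sub_distrib]
      rw [Scal, hL]
      simp [Finset.mul_sum]
    have hT2 : (∑ b, ∑ m, ginv b m * (∑ p, ∑ l, ginv p l * (ω p * R α b l m))) = L := by
      have step : (∑ b, ∑ m, ginv b m * (∑ p, ∑ l, ginv p l * (ω p * R α b l m)))
          = ∑ p, ∑ l, ginv p l * ω p * (∑ b, ∑ m, ginv b m * R α b l m) := by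
        have lhs : (∑ b, ∑ m, ginv b m * (∑ p, ∑ l, ginv p l * (ω p * R α b l m)))
            = ∑ b, ∑ m, ∑ p, ∑ l, ginv b m * (ginv p l * (ω p * R α b l m)) := by
          simp only [Finset.mul_sum]
        have rhs : (∑ p, ∑ l, ginv p l * ω p * (∑ b, ∑ m, ginv b m * R α b l m))
            = ∑ p, ∑ l, ∑ b, ∑ m, ginv p l * ω p * (ginv b m * R α b l m) := by
          simp only [Finset.mul_sum]
        rw [lhs, rhs, sum4_rot, sum4_rot]
        refine Finset.sum_congr rfl fun _ _ => Finset.sum_congr rfl fun _ _ =>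
          Finset.sum_congr rfl fun _ _ => Finset.sum_congr rfl fun _ _ => by ring
      rw [step, hL]
      refine Finset.sum_congr rfl fun p _ => Finset.sum_congr rfl fun l _ => ?_
      rw [hin α l]
    rw [hT2] at hT1
    rw [hL] at *
    linarith
  have key2 : ∀ α, (∑ t, ou t * Ricci n ginv R t α) = Scal n ginv R / 2 * ω α := by
    intro α
    rw [← part2 α]
    have e : (∑ p, ∑ t, ginv p t * ω p * Ricci n ginv R t α)
        = ∑ t, ∑ p, ginv p t * ω p * Ricci n ginv R t α := Finset.sum_comm
    rw [e]
    refine Finset.sum_congr rfl fun t _ => ?_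
    simp only [hou, Finset.sum_mul]
  refine ⟨part1, part2, ?_⟩
  intro hw
  obtain ⟨γ, hγ⟩ := Function.ne_iff.mp hw
  simp only [Pi.zero_apply] at hγ
  -- pointwise consequence of the hypothesis
  have hident : ∀ a b l m : Fin n,
      ω γ * R a b l m = ω a * R γ b l m - ω b * R γ a l m := by
    intro a b l m
    linear_combination h γ a b l m - ω a * h1 b γ l m
  -- antisymmetry of the fully raised tensor in its first two slots
  have hanti : ∀ a b l m : Fin n,
      (∑ p, ∑ q, ∑ r, ∑ s, ginv b p * ginv a q * ginv l r * ginv m s * R p q r s)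
      = -(∑ p, ∑ q, ∑ r, ∑ s, ginv a p * ginv b q * ginv l r * ginv m s * R p q r s) := by
    intro a b l m
    have e : (∑ p, ∑ q, ∑ r, ∑ s, ginv b p * ginv a q * ginv l r * ginv m s * R p q r s)
        = ∑ q, ∑ p, ∑ r, ∑ s, ginv b p * ginv a q * ginv l r * ginv m s * R p q r s :=
      Finset.sum_comm
    rw [e, ← Finset.sum_neg_distrib]
    refine Finset.sum_congr rfl fun x _ => ?_
    rw [← Finset.sum_neg_distrib]
    refine Finset.sum_congr rfl fun y _ => ?_
    rw [← Finset.sum_neg_distrib]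
    refine Finset.sum_congr rfl fun r _ => ?_
    rw [← Finset.sum_neg_distrib]
    refine Finset.sum_congr rfl fun t _ => ?_
    rw [h1 y x r t]; ring
  set S' : ℝ := Scal n ginv R with hS'
  set K : ℝ := ∑ a, ∑ b, ∑ l, ∑ m,
      (∑ p, ∑ q, ∑ r, ∑ s,
        ginv a p * ginv b q * ginv l r * ginv m s * R p q r s) * R a b l m with hK
  set W : ℝ := ∑ a, ∑ b,
      (∑ p, ∑ q, ginv a p * ginv b q * Ricci n ginv R p q) * Ricci n ginv R a b with hW
  set F : ℝ := ∑ a, ∑ b, ∑ l, ∑ m,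
      (∑ p, ∑ q, ∑ r, ∑ s,
        ginv a p * ginv b q * ginv l r * ginv m s * R p q r s) * (ω a * R γ b l m) with hF
  set G : ℝ := ∑ a, ∑ b, ∑ l, ∑ m,
      (∑ p, ∑ q, ∑ r, ∑ s,
        ginv a p * ginv b q * ginv l r * ginv m s * R p q r s) * (ω b * R γ a l m) with hG
  set T1 : ℝ := ∑ b, ∑ l, ∑ m,
      (∑ q, ∑ r, ∑ s, ginv b q * ginv l r * ginv m s * (ω r * Ricci n ginv R s q))
        * R γ b l m with hT1
  -- ω γ * K = F - G
  have eq1 : ω γ * K = F - G := by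
    rw [hK, hF, hG]
    simp only [Finset.mul_sum, ← Finset.sum_sub_distrib]
    refine Finset.sum_congr rfl fun a _ => Finset.sum_congr rfl fun b _ =>
      Finset.sum_congr rfl fun l _ => Finset.sum_congr rfl fun m _ => ?_
    linear_combination
      (∑ p, ∑ q, ∑ r, ∑ s, ginv a p * ginv b q * ginv l r * ginv m s * R p q r s)
        * hident a b l m
  -- G = -F
  have eq2 : G = -F := by
    rw [hG, hF]
    have e : (∑ a, ∑ b, ∑ l, ∑ m,
        (∑ p, ∑ q, ∑ r, ∑ s,
          ginv a p * ginv b q * ginv l r * ginv m s * R p q r s) * (ω b * R γ a l m))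
        = ∑ b, ∑ a, ∑ l, ∑ m,
        (∑ p, ∑ q, ∑ r, ∑ s,
          ginv a p * ginv b q * ginv l r * ginv m s * R p q r s) * (ω b * R γ a l m) :=
      Finset.sum_comm
    rw [e, ← Finset.sum_neg_distrib]
    refine Finset.sum_congr rfl fun x _ => ?_
    rw [← Finset.sum_neg_distrib]
    refine Finset.sum_congr rfl fun y _ => ?_
    rw [← Finset.sum_neg_distrib]
    refine Finset.sum_congr rfl fun l _ => ?_
    rw [← Finset.sum_neg_distrib]
    refine Finset.sum_congr rfl fun m _ => ?_
    rw [hanti x y l m]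
    ring
  -- contraction of ω with the raised tensor
  have hADef : ∀ b l m : Fin n, (∑ a, ω a * (∑ p, ∑ q, ∑ r, ∑ s,
        ginv a p * ginv b q * ginv l r * ginv m s * R p q r s))
      = ∑ q, ∑ r, ∑ s, ginv b q * ginv l r * ginv m s *
          (ω r * Ricci n ginv R s q - ω s * Ricci n ginv R r q) := by
    intro b l m
    calc (∑ a, ω a * (∑ p, ∑ q, ∑ r, ∑ s,
            ginv a p * ginv b q * ginv l r * ginv m s * R p q r s))
        = ∑ a, ∑ p, ∑ q, ∑ r, ∑ s,
            ω a * (ginv a p * ginv b q * ginv l r * ginv m s * R p q r s) := by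
          simp only [Finset.mul_sum]
      _ = ∑ p, ∑ a, ∑ q, ∑ r, ∑ s,
            ω a * (ginv a p * ginv b q * ginv l r * ginv m s * R p q r s) :=
          Finset.sum_comm
      _ = ∑ p, ou p * (∑ q, ∑ r, ∑ s, ginv b q * ginv l r * ginv m s * R p q r s) := by
          refine Finset.sum_congr rfl fun p _ => ?_
          have e1 : (∑ a, ∑ q, ∑ r, ∑ s,
              ω a * (ginv a p * ginv b q * ginv l r * ginv m s * R p q r s))
              = ∑ a, (ginv a p * ω a) *
                  (∑ q, ∑ r, ∑ s, ginv b q * ginv l r * ginv m s * R p q r s) := by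
            refine Finset.sum_congr rfl fun a _ => ?_
            simp only [Finset.mul_sum]
            refine Finset.sum_congr rfl fun q _ => Finset.sum_congr rfl fun r _ =>
              Finset.sum_congr rfl fun t _ => by ring
          rw [e1, ← Finset.sum_mul, hou]
      _ = ∑ q, ∑ r, ∑ s, ginv b q * ginv l r * ginv m s * (∑ p, ou p * R p q r s) :=
          pull3 ou (fun q r s => ginv b q * ginv l r * ginv m s) R
      _ = ∑ q, ∑ r, ∑ s, ginv b q * ginv l r * ginv m s *
            (ω r * Ricci n ginv R s q - ω s * Ricci n ginv R r q) := by
          refine Finset.sum_congr rfl fun q _ => Finset.sum_congr rfl fun r _ =>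
            Finset.sum_congr rfl fun t _ => ?_
          rw [key0]
  -- F in contracted form
  have eqF : F = ∑ b, ∑ l, ∑ m,
      (∑ q, ∑ r, ∑ s, ginv b q * ginv l r * ginv m s *
        (ω r * Ricci n ginv R s q - ω s * Ricci n ginv R r q)) * R γ b l m := by
    rw [hF]
    have e : (∑ a, ∑ b, ∑ l, ∑ m,
        (∑ p, ∑ q, ∑ r, ∑ s,
          ginv a p * ginv b q * ginv l r * ginv m s * R p q r s) * (ω a * R γ b l m))
        = ∑ b, ∑ l, ∑ m, ∑ a,
        (∑ p, ∑ q, ∑ r, ∑ s,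
          ginv a p * ginv b q * ginv l r * ginv m s * R p q r s) * (ω a * R γ b l m) :=
      sum4_rot _
    rw [e]
    refine Finset.sum_congr rfl fun b _ => Finset.sum_congr rfl fun l _ =>
      Finset.sum_congr rfl fun m _ => ?_
    calc (∑ a, (∑ p, ∑ q, ∑ r, ∑ s,
            ginv a p * ginv b q * ginv l r * ginv m s * R p q r s) * (ω a * R γ b l m))
        = ∑ a, (ω a * (∑ p, ∑ q, ∑ r, ∑ s,
            ginv a p * ginv b q * ginv l r * ginv m s * R p q r s)) * R γ b l m :=
          Finset.sum_congr rfl fun a _ => by ring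
      _ = (∑ a, ω a * (∑ p, ∑ q, ∑ r, ∑ s,
            ginv a p * ginv b q * ginv l r * ginv m s * R p q r s)) * R γ b l m := by
          rw [← Finset.sum_mul]
      _ = (∑ q, ∑ r, ∑ s, ginv b q * ginv l r * ginv m s *
            (ω r * Ricci n ginv R s q - ω s * Ricci n ginv R r q)) * R γ b l m := by
          rw [hADef b l m]
  -- split F = T1 - T2
  have esplit : F = T1 - (∑ b, ∑ l, ∑ m,
      (∑ q, ∑ r, ∑ s, ginv b q * ginv l r * ginv m s * (ω s * Ricci n ginv R r q))
        * R γ b l m) := by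
    have inner : ∀ b l m : Fin n, (∑ q, ∑ r, ∑ s, ginv b q * ginv l r * ginv m s *
          (ω r * Ricci n ginv R s q - ω s * Ricci n ginv R r q))
        = (∑ q, ∑ r, ∑ s, ginv b q * ginv l r * ginv m s * (ω r * Ricci n ginv R s q))
          - (∑ q, ∑ r, ∑ s, ginv b q * ginv l r * ginv m s * (ω s * Ricci n ginv R r q)) := by
      intro b l m
      simp only [← Finset.sum_sub_distrib]
      refine Finset.sum_congr rfl fun q _ => Finset.sum_congr rfl fun r _ =>
        Finset.sum_congr rfl fun t _ => by ring
    rw [eqF]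
    simp only [inner, sub_mul, Finset.sum_sub_distrib]
    rfl
  -- T2 = -T1
  have hT2neg : (∑ b, ∑ l, ∑ m,
      (∑ q, ∑ r, ∑ s, ginv b q * ginv l r * ginv m s * (ω s * Ricci n ginv R r q))
        * R γ b l m) = -T1 := by
    rw [hT1]
    have e : (∑ b, ∑ l, ∑ m,
        (∑ q, ∑ r, ∑ s, ginv b q * ginv l r * ginv m s * (ω s * Ricci n ginv R r q))
          * R γ b l m)
        = ∑ b, ∑ m, ∑ l,
        (∑ q, ∑ r, ∑ s, ginv b q * ginv l r * ginv m s * (ω s * Ricci n ginv R r q))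
          * R γ b l m :=
      Finset.sum_congr rfl fun b _ => Finset.sum_comm
    rw [e, ← Finset.sum_neg_distrib]
    refine Finset.sum_congr rfl fun b _ => ?_
    rw [← Finset.sum_neg_distrib]
    refine Finset.sum_congr rfl fun x _ => ?_
    rw [← Finset.sum_neg_distrib]
    refine Finset.sum_congr rfl fun y _ => ?_
    have ec : (∑ q, ∑ r, ∑ s, ginv b q * ginv y r * ginv x s * (ω s * Ricci n ginv R r q))
        = ∑ q, ∑ r, ∑ s, ginv b q * ginv x r * ginv y s * (ω r * Ricci n ginv R s q) := by
      refine Finset.sum_congr rfl fun q _ => ?_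
      have e2 : (∑ r, ∑ s, ginv b q * ginv y r * ginv x s * (ω s * Ricci n ginv R r q))
          = ∑ s, ∑ r, ginv b q * ginv y r * ginv x s * (ω s * Ricci n ginv R r q) :=
        Finset.sum_comm
      rw [e2]
      exact Finset.sum_congr rfl fun u _ => Finset.sum_congr rfl fun v _ => by ring
    rw [ec, h2 γ b y x]
    ring
  have eq3 : F = 2 * T1 := by rw [esplit, hT2neg]; ring
  -- factorize the coefficient appearing in T1
  have hC1fact : ∀ b l m : Fin n,
      (∑ q, ∑ r, ∑ s, ginv b q * ginv l r * ginv m s * (ω r * Ricci n ginv R s q))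
      = (∑ q, ∑ s, ginv b q * (ginv m s * Ricci n ginv R s q)) * ou l := by
    intro b l m
    have e : (∑ q, ∑ r, ∑ s, ginv b q * ginv l r * ginv m s * (ω r * Ricci n ginv R s q))
        = ∑ q, ∑ s, ∑ r, ginv b q * ginv l r * ginv m s * (ω r * Ricci n ginv R s q) :=
      Finset.sum_congr rfl fun q _ => Finset.sum_comm
    rw [e]
    simp only [hou]
    rw [Finset.sum_mul]
    refine Finset.sum_congr rfl fun q _ => ?_
    rw [Finset.sum_mul]
    refine Finset.sum_congr rfl fun t _ => ?_
    rw [Finset.mul_sum]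
    refine Finset.sum_congr rfl fun r _ => ?_
    rw [hgi l r]
    ring
  -- T1 after contracting over l
  have eqT1 : T1 = ∑ b, ∑ m, (∑ q, ∑ s, ginv b q * (ginv m s * Ricci n ginv R s q)) *
      (ω γ * Ricci n ginv R b m - ω b * Ricci n ginv R γ m) := by
    rw [hT1]
    have e0 : (∑ b, ∑ l, ∑ m,
        (∑ q, ∑ r, ∑ s, ginv b q * ginv l r * ginv m s * (ω r * Ricci n ginv R s q))
          * R γ b l m)
        = ∑ b, ∑ m, ∑ l,
        (∑ q, ∑ r, ∑ s, ginv b q * ginv l r * ginv m s * (ω r * Ricci n ginv R s q))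
          * R γ b l m :=
      Finset.sum_congr rfl fun b _ => Finset.sum_comm
    rw [e0]
    refine Finset.sum_congr rfl fun b _ => Finset.sum_congr rfl fun m _ => ?_
    calc (∑ l, (∑ q, ∑ r, ∑ s, ginv b q * ginv l r * ginv m s *
            (ω r * Ricci n ginv R s q)) * R γ b l m)
        = ∑ l, (∑ q, ∑ s, ginv b q * (ginv m s * Ricci n ginv R s q)) *
            (ou l * R γ b l m) :=
          Finset.sum_congr rfl fun l _ => by rw [hC1fact b l m]; ring
      _ = (∑ q, ∑ s, ginv b q * (ginv m s * Ricci n ginv R s q)) *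
            (∑ l, ou l * R γ b l m) := by rw [← Finset.mul_sum]
      _ = (∑ q, ∑ s, ginv b q * (ginv m s * Ricci n ginv R s q)) *
            (ω γ * Ricci n ginv R b m - ω b * Ricci n ginv R γ m) := by
          rw [key1 γ b m]
  -- split T1 into the Ricci-squared part and a remainder
  have eq4 : T1 = ω γ * W - (∑ b, ∑ m,
      (∑ p, ∑ q, ginv b p * ginv m q * Ricci n ginv R p q) * (ω b * Ricci n ginv R γ m)) := by
    rw [eqT1, hW]
    have eE : ∀ b m : Fin n, (∑ q, ∑ s, ginv b q * (ginv m s * Ricci n ginv R s q))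
        = ∑ p, ∑ q, ginv b p * ginv m q * Ricci n ginv R p q := by
      intro b m
      refine Finset.sum_congr rfl fun p _ => Finset.sum_congr rfl fun q _ => ?_
      rw [hRicS q p]; ring
    calc (∑ b, ∑ m, (∑ q, ∑ s, ginv b q * (ginv m s * Ricci n ginv R s q)) *
          (ω γ * Ricci n ginv R b m - ω b * Ricci n ginv R γ m))
        = ∑ b, ∑ m,
            (ω γ * ((∑ p, ∑ q, ginv b p * ginv m q * Ricci n ginv R p q) * Ricci n ginv R b m)
            - (∑ p, ∑ q, ginv b p * ginv m q * Ricci n ginv R p q) *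
                (ω b * Ricci n ginv R γ m)) := by
          refine Finset.sum_congr rfl fun b _ => Finset.sum_congr rfl fun m _ => ?_
          rw [eE b m]; ring
      _ = ω γ * (∑ a, ∑ b, (∑ p, ∑ q, ginv a p * ginv b q * Ricci n ginv R p q) *
              Ricci n ginv R a b)
          - (∑ b, ∑ m, (∑ p, ∑ q, ginv b p * ginv m q * Ricci n ginv R p q) *
              (ω b * Ricci n ginv R γ m)) := by
          simp only [Finset.sum_sub_distrib, Finset.mul_sum]
  -- evaluate the remainder
  have hP : (∑ b, ∑ m, (∑ p, ∑ q, ginv b p * ginv m q * Ricci n ginv R p q) *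
        (ω b * Ricci n ginv R γ m))
      = S' / 2 * (S' / 2 * ω γ) := by
    calc (∑ b, ∑ m, (∑ p, ∑ q, ginv b p * ginv m q * Ricci n ginv R p q) *
          (ω b * Ricci n ginv R γ m))
        = ∑ b, ∑ m, ∑ p, ∑ q, (ginv b p * ginv m q * Ricci n ginv R p q) *
            (ω b * Ricci n ginv R γ m) := by
          simp only [Finset.sum_mul]
      _ = ∑ p, ∑ q, ∑ b, ∑ m, (ginv b p * ginv m q * Ricci n ginv R p q) *
            (ω b * Ricci n ginv R γ m) := by
          rw [sum4_rot, sum4_rot]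
      _ = ∑ p, ∑ q, Ricci n ginv R p q *
            ((∑ b, ginv b p * ω b) * (∑ m, ginv m q * Ricci n ginv R γ m)) := by
          refine Finset.sum_congr rfl fun p _ => Finset.sum_congr rfl fun q _ => ?_
          rw [Finset.sum_mul_sum, Finset.mul_sum]
          refine Finset.sum_congr rfl fun b _ => ?_
          rw [Finset.mul_sum]
          exact Finset.sum_congr rfl fun m _ => by ring
      _ = ∑ q, ∑ p, Ricci n ginv R p q *
            ((∑ b, ginv b p * ω b) * (∑ m, ginv m q * Ricci n ginv R γ m)) :=
          Finset.sum_comm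
      _ = ∑ q, (S' / 2 * ω q) * (∑ m, ginv m q * Ricci n ginv R γ m) := by
          refine Finset.sum_congr rfl fun q _ => ?_
          calc (∑ p, Ricci n ginv R p q *
                ((∑ b, ginv b p * ω b) * (∑ m, ginv m q * Ricci n ginv R γ m)))
              = ∑ p, (ou p * Ricci n ginv R p q) *
                  (∑ m, ginv m q * Ricci n ginv R γ m) :=
                Finset.sum_congr rfl fun p _ => by rw [hou]; ring
            _ = (∑ p, ou p * Ricci n ginv R p q) *
                  (∑ m, ginv m q * Ricci n ginv R γ m) := by rw [← Finset.sum_mul]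
            _ = (S' / 2 * ω q) * (∑ m, ginv m q * Ricci n ginv R γ m) := by
                rw [key2 q]
      _ = ∑ q, ∑ m, (S' / 2 * ω q) * (ginv m q * Ricci n ginv R γ m) := by
          simp only [Finset.mul_sum]
      _ = ∑ m, ∑ q, (S' / 2 * ω q) * (ginv m q * Ricci n ginv R γ m) :=
          Finset.sum_comm
      _ = ∑ m, S' / 2 * (ou m * Ricci n ginv R m γ) := by
          refine Finset.sum_congr rfl fun m _ => ?_
          simp only [hou, Finset.sum_mul, Finset.mul_sum]
          refine Finset.sum_congr rfl fun q _ => ?_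
          rw [hgi m q, hRicS γ m]
          ring
      _ = S' / 2 * (∑ m, ou m * Ricci n ginv R m γ) := by rw [← Finset.mul_sum]
      _ = S' / 2 * (S' / 2 * ω γ) := by rw [key2 γ]
  -- assemble
  have hfinal : ω γ * K = 4 * (ω γ * W) - S' ^ 2 * ω γ := by
    linear_combination eq1 - eq2 + 2 * eq3 + 4 * eq4 - 4 * hP
  have hz : ω γ * (K - 4 * W + S' ^ 2) = 0 := by linear_combination hfinal
  exact (mul_eq_zero.mp hz).resolve_left hγ
end

section
/- Let (V,g) be an n-dimensional real vector space with nondegenerate symmetric bilinear form, n > 2, and R a tensor with Riemann curvature symmetries whose Ricci contraction is proportional to g (Einstein condition): Ric = (S/n) g. If there exists a nonzero ω ∈ V* with ω_{[γ}R_{αβ]λμ} = 0, then S = 0, hence Ric = 0, and moreover R^{αβλμ}R_{αβλμ} = 0. In particular, if g is positive definite then R = 0. -/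
open scoped BigOperators

private lemma sum3_zero {n : ℕ} (G : Fin n → Fin n → Fin n → ℝ)
    (hG : ∀ l m, (∑ x, G x l m) = 0) : (∑ x, ∑ l, ∑ m, G x l m) = 0 := by
  rw [Finset.sum_comm]
  refine Finset.sum_eq_zero fun l _ => ?_
  rw [Finset.sum_comm]
  exact Finset.sum_eq_zero fun m _ => hG l m

private lemma factA {n : ℕ} (f : Fin n → ℝ) (g : Fin n → Fin n → Fin n → ℝ) :
    (∑ p, ∑ q, ∑ r, ∑ s, f p * g q r s) = (∑ p, f p) * (∑ q, ∑ r, ∑ s, g q r s) := by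
  rw [Finset.sum_mul]
  simp only [Finset.mul_sum]

private lemma factB {n : ℕ} (f : Fin n → ℝ) (g : Fin n → Fin n → Fin n → ℝ) :
    (∑ p, ∑ q, ∑ r, ∑ s, f q * g p r s) = (∑ q, f q) * (∑ p, ∑ r, ∑ s, g p r s) := by
  conv_lhs => rw [Finset.sum_comm]
  exact factA f g

/-- the vector `w` obtained by raising the index of `ω` -/
private def wv {n : ℕ} (ginv : Fin n → Fin n → ℝ) (ω : Fin n → ℝ) (p : Fin n) : ℝ :=
  ∑ γ, ginv γ p * ω γ

private def Tt {n : ℕ} (ginv : Fin n → Fin n → ℝ) (R : Fin n → Fin n → Fin n → Fin n → ℝ)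
    (γ0 b l m : Fin n) : ℝ :=
  ∑ q, ∑ r, ∑ s, ginv b q * ginv l r * ginv m s * R γ0 q r s

/-- Let `(V,g)` be `n`-dimensional with nondegenerate symmetric `g`, `n > 2`, and `R`
Riemann-symmetric and Einstein: `Ric = (S/n) g`.  If there is a nonzero `ω ∈ V*` with
`ω_{[γ}R_{αβ]λμ} = 0`, then `S = 0`, `Ric = 0` and `R^{αβλμ}R_{αβλμ} = 0`;
if moreover `g` is positive definite then `R = 0`. -/
theorem stmt5 (n : ℕ) (hn : 2 < n) (g ginv : Fin n → Fin n → ℝ)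
    (hgsymm : ∀ a b, g a b = g b a)
    (hginv : ∀ a b, (∑ p, g a p * ginv p b) = if a = b then 1 else 0)
    (R : Fin n → Fin n → Fin n → Fin n → ℝ) (hR : IsRiemannTensor n R)
    (hEinstein : ∀ a b, Ricci n ginv R a b = Scal n ginv R / n * g a b)
    (ω : Fin n → ℝ) (hω : ω ≠ 0)
    (h : ∀ γ α β l m, ω γ * R α β l m + ω α * R β γ l m + ω β * R γ α l m = 0) :
    Scal n ginv R = 0 ∧ (∀ a b, Ricci n ginv R a b = 0) ∧
    (∑ a, ∑ b, ∑ l, ∑ m,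
        (∑ p, ∑ q, ∑ r, ∑ s,
          ginv a p * ginv b q * ginv l r * ginv m s * R p q r s) * R a b l m) = 0 ∧
    ((∀ v : Fin n → ℝ, v ≠ 0 → 0 < ∑ a, ∑ b, g a b * v a * v b) → R = 0) := by
  classical
  obtain ⟨h1, h2, h3, h4⟩ := hR
  -- matrix facts about ginv
  have hGGi : (Matrix.of g) * (Matrix.of ginv) = 1 := by
    ext a b
    rw [Matrix.mul_apply]
    simpa [Matrix.one_apply] using hginv a b
  have hGiG : (Matrix.of ginv) * (Matrix.of g) = 1 := mul_eq_one_comm.mp hGGi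
  have hginv' : ∀ a b, (∑ p, ginv a p * g p b) = if a = b then 1 else 0 := by
    intro a b
    have h7 : ((Matrix.of ginv) * (Matrix.of g)) a b = (1 : Matrix (Fin n) (Fin n) ℝ) a b := by
      rw [hGiG]
    rw [Matrix.mul_apply] at h7
    simpa [Matrix.one_apply] using h7
  have hGisym : ∀ a b, ginv a b = ginv b a := by
    have hGs : Matrix.transpose (Matrix.of g) = Matrix.of g := by
      ext a b; simp [Matrix.transpose_apply, hgsymm b a]
    have h5 : Matrix.transpose (Matrix.of ginv) * (Matrix.of g) = 1 := by
      have h8 := congrArg Matrix.transpose hGGi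
      rw [Matrix.transpose_mul, hGs] at h8
      simpa using h8
    have h6 : Matrix.transpose (Matrix.of ginv) = Matrix.of ginv := by
      calc Matrix.transpose (Matrix.of ginv)
          = Matrix.transpose (Matrix.of ginv) * ((Matrix.of g) * (Matrix.of ginv)) := by rw [hGGi, mul_one]
        _ = (Matrix.transpose (Matrix.of ginv) * (Matrix.of g)) * (Matrix.of ginv) := by rw [mul_assoc]
        _ = Matrix.of ginv := by rw [h5, one_mul]
    intro a b
    have h9 : Matrix.transpose (Matrix.of ginv) a b = (Matrix.of ginv) a b := by rw [h6]
    simpa [Matrix.transpose_apply] using h9.symm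
  have hw2 : ∀ a, (∑ p, ginv a p * ω p) = wv ginv ω a := by
    intro a
    simp only [wv]
    exact Finset.sum_congr rfl fun p _ => by rw [hGisym a p]
  -- contraction of w with g gives back ω
  have hwg : ∀ α, (∑ l, wv ginv ω l * g α l) = ω α := by
    intro α
    calc (∑ l, wv ginv ω l * g α l)
        = ∑ l, ∑ γ, (ginv γ l * ω γ) * g α l := by
          refine Finset.sum_congr rfl fun l _ => ?_
          simp only [wv]
          rw [Finset.sum_mul]
      _ = ∑ γ, ∑ l, (ginv γ l * ω γ) * g α l := Finset.sum_comm
      _ = ∑ γ, (∑ l, g α l * ginv l γ) * ω γ := by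
          refine Finset.sum_congr rfl fun γ _ => ?_
          rw [Finset.sum_mul]
          exact Finset.sum_congr rfl fun l _ => by rw [hGisym γ l]; ring
      _ = ∑ γ, (if α = γ then 1 else 0) * ω γ := by
          exact Finset.sum_congr rfl fun γ _ => by rw [hginv α γ]
      _ = ω α := by simp
  -- key contraction identity
  have keyA : ∀ α β μ, (∑ l, wv ginv ω l * R α β l μ)
      = ω α * Ricci n ginv R β μ - ω β * Ricci n ginv R α μ := by
    intro α β μ
    calc (∑ l, wv ginv ω l * R α β l μ)
        = ∑ l, ∑ γ, (ginv γ l * ω γ) * R α β l μ := by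
          refine Finset.sum_congr rfl fun l _ => ?_
          simp only [wv]
          rw [Finset.sum_mul]
      _ = ∑ γ, ∑ l, (ginv γ l * ω γ) * R α β l μ := Finset.sum_comm
      _ = ∑ γ, ∑ l, (ω α * (ginv γ l * R γ β l μ) - ω β * (ginv γ l * R γ α l μ)) := by
          refine Finset.sum_congr rfl fun γ _ => Finset.sum_congr rfl fun l _ => ?_
          linear_combination (ginv γ l) * h γ α β l μ - ginv γ l * ω α * h1 β γ l μ
      _ = (∑ γ, ∑ l, ω α * (ginv γ l * R γ β l μ))
          - ∑ γ, ∑ l, ω β * (ginv γ l * R γ α l μ) := by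
          simp only [Finset.sum_sub_distrib]
      _ = ω α * Ricci n ginv R β μ - ω β * Ricci n ginv R α μ := by
          simp only [Ricci, Finset.mul_sum]
  -- scalar curvature vanishes
  have hscal : Scal n ginv R = 0 := by
    obtain ⟨α, hα0⟩ := Function.ne_iff.mp hω
    have hα : ω α ≠ 0 := by simpa using hα0
    have E1 : (∑ β, ∑ μ, ginv β μ * ∑ l, wv ginv ω l * R α β l μ)
        = Scal n ginv R / n * ω α := by
      calc (∑ β, ∑ μ, ginv β μ * ∑ l, wv ginv ω l * R α β l μ)
          = ∑ β, ∑ μ, ∑ l, wv ginv ω l * (ginv β μ * R β α μ l) := by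
            refine Finset.sum_congr rfl fun β _ => Finset.sum_congr rfl fun μ _ => ?_
            rw [Finset.mul_sum]
            refine Finset.sum_congr rfl fun l _ => ?_
            linear_combination (ginv β μ * wv ginv ω l) * h1 α β l μ
              - (ginv β μ * wv ginv ω l) * h2 β α l μ
        _ = ∑ β, ∑ l, ∑ μ, wv ginv ω l * (ginv β μ * R β α μ l) :=
            Finset.sum_congr rfl fun β _ => Finset.sum_comm
        _ = ∑ l, ∑ β, ∑ μ, wv ginv ω l * (ginv β μ * R β α μ l) := Finset.sum_comm
        _ = ∑ l, wv ginv ω l * Ricci n ginv R α l := by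
            simp only [Ricci, Finset.mul_sum]
        _ = ∑ l, wv ginv ω l * (Scal n ginv R / n * g α l) := by
            exact Finset.sum_congr rfl fun l _ => by rw [hEinstein α l]
        _ = Scal n ginv R / n * ∑ l, wv ginv ω l * g α l := by
            rw [Finset.mul_sum]
            exact Finset.sum_congr rfl fun l _ => by ring
        _ = Scal n ginv R / n * ω α := by rw [hwg α]
    have E2 : (∑ β, ∑ μ, ginv β μ * ∑ l, wv ginv ω l * R α β l μ)
        = ω α * Scal n ginv R - Scal n ginv R / n * ω α := by
      calc (∑ β, ∑ μ, ginv β μ * ∑ l, wv ginv ω l * R α β l μ)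
          = ∑ β, ∑ μ, ginv β μ * (ω α * Ricci n ginv R β μ - ω β * Ricci n ginv R α μ) := by
            exact Finset.sum_congr rfl fun β _ => Finset.sum_congr rfl fun μ _ => by
              rw [keyA α β μ]
        _ = ∑ β, ∑ μ, (ω α * (ginv β μ * Ricci n ginv R β μ)
              - (Scal n ginv R / n * ω β) * (ginv β μ * g μ α)) := by
            refine Finset.sum_congr rfl fun β _ => Finset.sum_congr rfl fun μ _ => ?_
            rw [hEinstein α μ, hgsymm α μ]
            ring
        _ = (∑ β, ∑ μ, ω α * (ginv β μ * Ricci n ginv R β μ))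
            - ∑ β, ∑ μ, (Scal n ginv R / n * ω β) * (ginv β μ * g μ α) := by
            simp only [Finset.sum_sub_distrib]
        _ = ω α * Scal n ginv R - Scal n ginv R / n * ω α := by
            have hfirst : (∑ β, ∑ μ, ω α * (ginv β μ * Ricci n ginv R β μ))
                = ω α * Scal n ginv R := by
              simp only [Scal, Finset.mul_sum]
            have hsecond : (∑ β, ∑ μ, (Scal n ginv R / n * ω β) * (ginv β μ * g μ α))
                = Scal n ginv R / n * ω α := by
              calc (∑ β, ∑ μ, (Scal n ginv R / n * ω β) * (ginv β μ * g μ α))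
                  = ∑ β, (Scal n ginv R / n * ω β) * (∑ μ, ginv β μ * g μ α) := by
                    exact Finset.sum_congr rfl fun β _ => by rw [Finset.mul_sum]
                _ = ∑ β, (Scal n ginv R / n * ω β) * (if β = α then 1 else 0) := by
                    exact Finset.sum_congr rfl fun β _ => by rw [hginv' β α]
                _ = Scal n ginv R / n * ω α := by simp
            rw [hfirst, hsecond]
    have hEq : Scal n ginv R / n * ω α
        = ω α * Scal n ginv R - Scal n ginv R / n * ω α := E1.symm.trans E2
    have h2n : (2:ℝ) < (n:ℝ) := by exact_mod_cast hn
    have hne : (n:ℝ) ≠ 0 := by linarith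
    have h9 : (Scal n ginv R - 2 * (Scal n ginv R / n)) * ω α = 0 := by
      linear_combination (-1 : ℝ) * hEq
    have h10 : Scal n ginv R - 2 * (Scal n ginv R / n) = 0 :=
      (mul_eq_zero.mp h9).resolve_right hα
    have hdm : Scal n ginv R / (n:ℝ) * (n:ℝ) = Scal n ginv R := div_mul_cancel₀ _ hne
    have h11 : Scal n ginv R * ((n:ℝ) - 2) = 0 := by
      linear_combination (n:ℝ) * h10 + 2 * hdm
    have h12 : ((n:ℝ) - 2) ≠ 0 := by linarith
    exact (mul_eq_zero.mp h11).resolve_right h12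
  have hRic0 : ∀ a b, Ricci n ginv R a b = 0 := by
    intro a b
    rw [hEinstein a b, hscal]
    ring
  -- contraction of w with R vanishes on each slot
  have kw3 : ∀ α β μ, (∑ l, wv ginv ω l * R α β l μ) = 0 := by
    intro α β μ
    rw [keyA α β μ, hRic0, hRic0]
    ring
  have kw1 : ∀ β l m, (∑ γ, wv ginv ω γ * R γ β l m) = 0 := by
    intro β l m
    calc (∑ γ, wv ginv ω γ * R γ β l m)
        = ∑ γ, wv ginv ω γ * R l m γ β :=
          Finset.sum_congr rfl fun γ _ => by rw [h3 γ β l m]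
      _ = 0 := kw3 l m β
  have kw2 : ∀ α l m, (∑ γ, wv ginv ω γ * R α γ l m) = 0 := by
    intro α l m
    calc (∑ γ, wv ginv ω γ * R α γ l m)
        = ∑ γ, -(wv ginv ω γ * R γ α l m) :=
          Finset.sum_congr rfl fun γ _ => by rw [h1 α γ l m]; ring
      _ = -∑ γ, wv ginv ω γ * R γ α l m := by rw [Finset.sum_neg_distrib]
      _ = 0 := by rw [kw1 α l m]; ring
  -- pick γ0 with ω γ0 ≠ 0
  obtain ⟨γ0, hγ00⟩ := Function.ne_iff.mp hω
  have hγ0 : ω γ0 ≠ 0 := by simpa using hγ00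
  -- decomposition of the raised tensor
  have hdecomp : ∀ a b l m, ω γ0 * (∑ p, ∑ q, ∑ r, ∑ s,
        ginv a p * ginv b q * ginv l r * ginv m s * R p q r s)
      = wv ginv ω a * Tt ginv R γ0 b l m - wv ginv ω b * Tt ginv R γ0 a l m := by
    intro a b l m
    calc ω γ0 * (∑ p, ∑ q, ∑ r, ∑ s, ginv a p * ginv b q * ginv l r * ginv m s * R p q r s)
        = ∑ p, ∑ q, ∑ r, ∑ s,
            ((ginv a p * ω p) * (ginv b q * ginv l r * ginv m s * R γ0 q r s)
              - (ginv b q * ω q) * (ginv a p * ginv l r * ginv m s * R γ0 p r s)) := by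
          simp only [Finset.mul_sum]
          refine Finset.sum_congr rfl fun p _ => Finset.sum_congr rfl fun q _ =>
            Finset.sum_congr rfl fun r _ => Finset.sum_congr rfl fun s _ => ?_
          linear_combination (ginv a p * ginv b q * ginv l r * ginv m s) * h γ0 p q r s
            - ginv a p * ginv b q * ginv l r * ginv m s * ω p * h1 q γ0 r s
      _ = (∑ p, ∑ q, ∑ r, ∑ s,
            (ginv a p * ω p) * (ginv b q * ginv l r * ginv m s * R γ0 q r s))
          - ∑ p, ∑ q, ∑ r, ∑ s,
            (ginv b q * ω q) * (ginv a p * ginv l r * ginv m s * R γ0 p r s) := by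
          simp only [Finset.sum_sub_distrib]
      _ = (∑ p, ginv a p * ω p) * Tt ginv R γ0 b l m
          - (∑ q, ginv b q * ω q) * Tt ginv R γ0 a l m := by
          rw [factA (fun p => ginv a p * ω p)
              (fun q r s => ginv b q * ginv l r * ginv m s * R γ0 q r s),
            factB (fun q => ginv b q * ω q)
              (fun p r s => ginv a p * ginv l r * ginv m s * R γ0 p r s)]
          rfl
      _ = wv ginv ω a * Tt ginv R γ0 b l m - wv ginv ω b * Tt ginv R γ0 a l m := by
          rw [hw2 a, hw2 b]
  -- the quadratic invariant vanishes
  have hbig : (∑ a, ∑ b, ∑ l, ∑ m,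
      (∑ p, ∑ q, ∑ r, ∑ s,
        ginv a p * ginv b q * ginv l r * ginv m s * R p q r s) * R a b l m) = 0 := by
    have hmul : ω γ0 * (∑ a, ∑ b, ∑ l, ∑ m,
        (∑ p, ∑ q, ∑ r, ∑ s,
          ginv a p * ginv b q * ginv l r * ginv m s * R p q r s) * R a b l m) = 0 := by
      calc ω γ0 * (∑ a, ∑ b, ∑ l, ∑ m,
          (∑ p, ∑ q, ∑ r, ∑ s,
            ginv a p * ginv b q * ginv l r * ginv m s * R p q r s) * R a b l m)
          = ∑ a, ∑ b, ∑ l, ∑ m,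
              (wv ginv ω a * Tt ginv R γ0 b l m * R a b l m
                - wv ginv ω b * Tt ginv R γ0 a l m * R a b l m) := by
            simp only [Finset.mul_sum]
            refine Finset.sum_congr rfl fun a _ => Finset.sum_congr rfl fun b _ =>
              Finset.sum_congr rfl fun l _ => Finset.sum_congr rfl fun m _ => ?_
            linear_combination R a b l m * hdecomp a b l m
        _ = (∑ a, ∑ b, ∑ l, ∑ m, wv ginv ω a * Tt ginv R γ0 b l m * R a b l m)
            - ∑ a, ∑ b, ∑ l, ∑ m, wv ginv ω b * Tt ginv R γ0 a l m * R a b l m := by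
            simp only [Finset.sum_sub_distrib]
        _ = 0 := by
            have hz1 : (∑ a, ∑ b, ∑ l, ∑ m,
                wv ginv ω a * Tt ginv R γ0 b l m * R a b l m) = 0 := by
              rw [Finset.sum_comm]
              refine Finset.sum_eq_zero fun b _ => sum3_zero _ fun l m => ?_
              calc (∑ a, wv ginv ω a * Tt ginv R γ0 b l m * R a b l m)
                  = Tt ginv R γ0 b l m * ∑ a, wv ginv ω a * R a b l m := by
                    rw [Finset.mul_sum]
                    exact Finset.sum_congr rfl fun a _ => by ring
                _ = 0 := by rw [kw1 b l m, mul_zero]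
            have hz2 : (∑ a, ∑ b, ∑ l, ∑ m,
                wv ginv ω b * Tt ginv R γ0 a l m * R a b l m) = 0 := by
              refine Finset.sum_eq_zero fun a _ => sum3_zero _ fun l m => ?_
              calc (∑ b, wv ginv ω b * Tt ginv R γ0 a l m * R a b l m)
                  = Tt ginv R γ0 a l m * ∑ b, wv ginv ω b * R a b l m := by
                    rw [Finset.mul_sum]
                    exact Finset.sum_congr rfl fun b _ => by ring
                _ = 0 := by rw [kw2 a l m, mul_zero]
            rw [hz1, hz2]
            ring
    exact (mul_eq_zero.mp hmul).resolve_left hγ0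
  refine ⟨hscal, hRic0, hbig, ?_⟩
  -- positive definite case
  intro hpos
  have hgw : ∀ p, (∑ q, g p q * wv ginv ω q) = ω p := by
    intro p
    calc (∑ q, g p q * wv ginv ω q)
        = ∑ q, ∑ γ, (g p q * ginv q γ) * ω γ := by
          refine Finset.sum_congr rfl fun q _ => ?_
          simp only [wv]
          rw [Finset.mul_sum]
          exact Finset.sum_congr rfl fun γ _ => by rw [hGisym γ q]; ring
      _ = ∑ γ, ∑ q, (g p q * ginv q γ) * ω γ := Finset.sum_comm
      _ = ∑ γ, (∑ q, g p q * ginv q γ) * ω γ :=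
          Finset.sum_congr rfl fun γ _ => (Finset.sum_mul _ _ _).symm
      _ = ∑ γ, (if p = γ then 1 else 0) * ω γ :=
          Finset.sum_congr rfl fun γ _ => by rw [hginv p γ]
      _ = ω p := by simp
  have hwne : wv ginv ω ≠ 0 := by
    intro hww
    apply hω
    funext p
    have := hgw p
    rw [hww] at this
    simpa using this.symm
  have hc : (∑ p, ω p * wv ginv ω p)
      = ∑ a, ∑ b, g a b * wv ginv ω a * wv ginv ω b := by
    calc (∑ p, ω p * wv ginv ω p)
        = ∑ p, (∑ q, g p q * wv ginv ω q) * wv ginv ω p := by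
          exact Finset.sum_congr rfl fun p _ => by rw [hgw p]
      _ = ∑ p, ∑ q, (g p q * wv ginv ω q) * wv ginv ω p := by
          exact Finset.sum_congr rfl fun p _ => Finset.sum_mul _ _ _
      _ = ∑ a, ∑ b, g a b * wv ginv ω a * wv ginv ω b := by
          exact Finset.sum_congr rfl fun a _ => Finset.sum_congr rfl fun b _ => by ring
  have hcpos : 0 < ∑ p, ω p * wv ginv ω p := by
    rw [hc]
    exact hpos _ hwne
  have hcR : ∀ α β l m, (∑ p, ω p * wv ginv ω p) * R α β l m = 0 := by
    intro α β l m
    calc (∑ p, ω p * wv ginv ω p) * R α β l m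
        = ∑ p, (ω p * wv ginv ω p) * R α β l m := Finset.sum_mul _ _ _
      _ = ∑ p, (-(ω α) * (wv ginv ω p * R β p l m) - ω β * (wv ginv ω p * R p α l m)) := by
          refine Finset.sum_congr rfl fun p _ => ?_
          linear_combination (wv ginv ω p) * h p α β l m
      _ = -(ω α) * (∑ p, wv ginv ω p * R β p l m)
          - ω β * (∑ p, wv ginv ω p * R p α l m) := by
          rw [Finset.sum_sub_distrib, Finset.mul_sum, Finset.mul_sum]
      _ = 0 := by rw [kw2 β l m, kw1 α l m]; ring
  funext a b l m
  have h13 := hcR a b l m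
  have h14 : R a b l m = 0 := (mul_eq_zero.mp h13).resolve_left (ne_of_gt hcpos)
  simpa using h14
end

section
/- Let (V,g) be a real vector space with nondegenerate symmetric bilinear form and let ω, ρ ∈ V* be linearly independent. Define R_{αβλμ} = A(ω_αρ_β − ω_βρ_α)(ρ_λω_μ − ρ_μω_λ) for some A ∈ ℝ (the curvature of a type II space). Then R satisfies the semi-symmetry identity: R^ρ_{αλμ}R_{ρβγδ} + R^ρ_{βλμ}R_{αργδ} + R^ρ_{γλμ}R_{αβρδ} + R^ρ_{δλμ}R_{αβγρ} = 0, where indices are raised with g. -/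
open scoped BigOperators
open Matrix

/-- The curvature tensor of a type II space:
`R_{αβλμ} = A (ω_α ρ_β − ω_β ρ_α)(ρ_λ ω_μ − ρ_μ ω_λ) = 4A ω_{[α}ρ_{β]}ρ_{[λ}ω_{μ]}`. -/
def typeIIR (n : ℕ) (A : ℝ) (ω ρ : Fin n → ℝ) (a b l m : Fin n) : ℝ :=
  A * (ω a * ρ b - ω b * ρ a) * (ρ l * ω m - ρ m * ω l)

/-- A type II curvature tensor satisfies the semi-symmetry identity
`R^σ_{αλμ}R_{σβγδ} + R^σ_{βλμ}R_{ασγδ} + R^σ_{γλμ}R_{αβσδ} + R^σ_{δλμ}R_{αβγσ} = 0`,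
indices raised with the nondegenerate symmetric bilinear form `g`. -/
theorem stmt7 (n : ℕ) (g ginv : Fin n → Fin n → ℝ)
    (hgsymm : ∀ a b, g a b = g b a)
    (hginv : ∀ a b, (∑ p, g a p * ginv p b) = if a = b then 1 else 0)
    (A : ℝ) (ω ρ : Fin n → ℝ) (hind : LinearIndependent ℝ ![ω, ρ]) :
    ∀ α β γ δ l m,
      (∑ p, ∑ t, ginv p t *
        (typeIIR n A ω ρ t α l m * typeIIR n A ω ρ p β γ δ
          + typeIIR n A ω ρ t β l m * typeIIR n A ω ρ α p γ δ
          + typeIIR n A ω ρ t γ l m * typeIIR n A ω ρ α β p δ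
          + typeIIR n A ω ρ t δ l m * typeIIR n A ω ρ α β γ p)) = 0 := by
  -- ginv is symmetric
  have hgi : ∀ a b, ginv a b = ginv b a := by
    intro a b
    set G : Matrix (Fin n) (Fin n) ℝ := Matrix.of g with hG
    set Gi : Matrix (Fin n) (Fin n) ℝ := Matrix.of ginv with hGi
    have h1 : G * Gi = 1 := by
      ext i j
      simp [Matrix.mul_apply, Matrix.one_apply, hG, hGi, hginv i j]
    have hGt : Gᵀ = G := by
      ext i j
      exact hgsymm j i
    have h2 : Giᵀ * G = 1 := by
      have := congrArg Matrix.transpose h1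
      simpa [Matrix.transpose_mul, hGt] using this
    have h3 : Gi * G = 1 := mul_eq_one_comm.mp h1
    have h4 : Giᵀ = Gi := by
      calc Giᵀ = Giᵀ * (G * Gi) := by rw [h1, Matrix.mul_one]
        _ = (Giᵀ * G) * Gi := by rw [Matrix.mul_assoc]
        _ = Gi := by rw [h2, Matrix.one_mul]
    exact (congrFun (congrFun h4 b) a)
  intro α β γ δ l m
  set C : ℝ := -2 * A ^ 2 * (ρ l * ω m - ρ m * ω l) * (ω α * ρ β - ω β * ρ α) *
      (ω γ * ρ δ - ω δ * ρ γ) with hC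
  have step1 : (∑ p, ∑ t, ginv p t *
        (typeIIR n A ω ρ t α l m * typeIIR n A ω ρ p β γ δ
          + typeIIR n A ω ρ t β l m * typeIIR n A ω ρ α p γ δ
          + typeIIR n A ω ρ t γ l m * typeIIR n A ω ρ α β p δ
          + typeIIR n A ω ρ t δ l m * typeIIR n A ω ρ α β γ p))
      = (∑ p, ∑ t, C * (ginv p t * (ω t * ρ p)))
        - (∑ p, ∑ t, C * (ginv p t * (ω p * ρ t))) := by
    rw [← Finset.sum_sub_distrib]
    refine Finset.sum_congr rfl fun p _ => ?_
    rw [← Finset.sum_sub_distrib]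
    refine Finset.sum_congr rfl fun t _ => ?_
    simp only [typeIIR, hC]
    ring
  rw [step1]
  have hswap : (∑ p, ∑ t, C * (ginv p t * (ω t * ρ p)))
      = (∑ p, ∑ t, C * (ginv p t * (ω p * ρ t))) := by
    rw [Finset.sum_comm]
    refine Finset.sum_congr rfl fun p _ => Finset.sum_congr rfl fun t _ => ?_
    rw [hgi t p]
  rw [hswap, sub_self]
end

section
/- Let (V,g) be a real vector space with nondegenerate symmetric bilinear form, and let ω,ρ ∈ V* be orthonormal with g(ω,ω)=ε_ω=±1, g(ρ,ρ)=ε_ρ=±1, g(ω,ρ)=0. Let R_{αβλμ} = 4A ω_{[α}ρ_{β]}ρ_{[λ}ω_{μ]} with A ≠ 0, Ric its Ricci contraction and S its scalar curvature. Then: S = −2ε_ρε_ωA ≠ 0; Ric_{αβ} = (S/2)(ε_ω ω_αω_β + ε_ρ ρ_αρ_β); (S/2) R_{αβλμ} = R_{αλ}R_{βμ} − R_{αμ}R_{βλ}; R^α_ρ R^ρ_β = (S/2) R^α_β; R_{αβ}R^{αβ} = S²/2; R_{αβρσ}R^{ρσλμ} = S R_{αβ}{}^{λμ}; and R_{αβλμ}R^{αβλμ}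 = S². -/
open scoped BigOperators

open Matrix

private lemma sum_comb2 {α : Type*} [Fintype α] {f g h : α → ℝ} {c d : ℝ}
    (H : ∀ x, f x = c * g x + d * h x) :
    (∑ x, f x) = c * (∑ x, g x) + d * (∑ x, h x) := by
  rw [Finset.mul_sum, Finset.mul_sum, ← Finset.sum_add_distrib]
  exact Finset.sum_congr rfl fun x _ => H x

private lemma sum_comb4 {α : Type*} [Fintype α] {f g1 g2 g3 g4 : α → ℝ} {c1 c2 c3 c4 : ℝ}
    (H : ∀ x, f x = c1 * g1 x + c2 * g2 x + c3 * g3 x + c4 * g4 x) :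
    (∑ x, f x) = c1 * (∑ x, g1 x) + c2 * (∑ x, g2 x) + c3 * (∑ x, g3 x) + c4 * (∑ x, g4 x) := by
  simp only [Finset.mul_sum, ← Finset.sum_add_distrib]
  exact Finset.sum_congr rfl fun x _ => H x

private lemma sum_pull2 {n : ℕ} (c : ℝ) (h : Fin n → Fin n → ℝ) :
    (∑ p, ∑ q, c * h p q) = c * ∑ p, ∑ q, h p q := by
  rw [Finset.mul_sum]
  exact Finset.sum_congr rfl fun p _ => (Finset.mul_sum _ _ _).symm

/-- Proposition on type II_ε spaces: with `ω,ρ` orthonormal (`g(ω,ω)=ε_ω=±1`,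
`g(ρ,ρ)=ε_ρ=±1`, `g(ω,ρ)=0`) and `R = 4A ω_{[α}ρ_{β]}ρ_{[λ}ω_{μ]}`, `A ≠ 0`:
`S = −2ε_ρε_ωA ≠ 0`; `Ric = (S/2)(ε_ω ω⊗ω + ε_ρ ρ⊗ρ)`;
`(S/2)R_{αβλμ} = Ric_{αλ}Ric_{βμ} − Ric_{αμ}Ric_{βλ}`; `Ric∘Ric = (S/2)Ric` (mixed);
`Ric_{αβ}Ric^{αβ} = S²/2`; `R_{αβρσ}R^{ρσλμ} = S R_{αβ}{}^{λμ}`;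
`R_{αβλμ}R^{αβλμ} = S²`. -/
theorem stmt8 (n : ℕ) (g ginv : Fin n → Fin n → ℝ)
    (hgsymm : ∀ a b, g a b = g b a)
    (hginv : ∀ a b, (∑ p, g a p * ginv p b) = if a = b then 1 else 0)
    (A : ℝ) (hA : A ≠ 0) (ω ρ : Fin n → ℝ) (εω ερ : ℝ)
    (hεω : εω = 1 ∨ εω = -1) (hερ : ερ = 1 ∨ ερ = -1)
    (hωω : (∑ a, ∑ b, ginv a b * ω a * ω b) = εω)
    (hρρ : (∑ a, ∑ b, ginv a b * ρ a * ρ b) = ερ)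
    (hωρ : (∑ a, ∑ b, ginv a b * ω a * ρ b) = 0) :
    letI R := typeIIR n A ω ρ
    letI Ric := Ricci n ginv R
    letI S := Scal n ginv R
    letI Rm := fun a b => ∑ t, ginv a t * Ric t b               -- Ric with first index up
    letI Rlastup := fun a b l m => ∑ s, ∑ t, ginv l s * ginv m t * R a b s t
    letI Rallup := fun p q l m => ∑ s, ∑ t, ginv p s * ginv q t * Rlastup s t l m
    S = -2 * ερ * εω * A ∧ S ≠ 0 ∧
    (∀ a b, Ric a b = S / 2 * (εω * ω a * ω b + ερ * ρ a * ρ b)) ∧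
    (∀ a b l m, S / 2 * R a b l m = Ric a l * Ric b m - Ric a m * Ric b l) ∧
    (∀ a b, (∑ s, Rm a s * Rm s b) = S / 2 * Rm a b) ∧
    (∑ a, ∑ b, (∑ p, ∑ q, ginv a p * ginv b q * Ric p q) * Ric a b) = S ^ 2 / 2 ∧
    (∀ a b l m, (∑ p, ∑ q, R a b p q * Rallup p q l m) = S * Rlastup a b l m) ∧
    (∑ a, ∑ b, ∑ l, ∑ m, Rallup a b l m * R a b l m) = S ^ 2 := by
  -- symmetry of the inverse metric
  have hsym : ∀ a b, ginv a b = ginv b a := by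
    have hMN : (Matrix.of g) * (Matrix.of ginv) = 1 := by
      ext a b
      simpa [Matrix.mul_apply, Matrix.one_apply] using hginv a b
    have hMt : (Matrix.of g)ᵀ = Matrix.of g := by
      ext a b; exact hgsymm b a
    have hNt : (Matrix.of ginv)ᵀ = Matrix.of ginv := by
      calc (Matrix.of ginv)ᵀ
          = (Matrix.of ginv)ᵀ * ((Matrix.of g) * (Matrix.of ginv)) := by
            rw [hMN, Matrix.mul_one]
        _ = ((Matrix.of g) * (Matrix.of ginv))ᵀ * (Matrix.of ginv) := by
            rw [Matrix.transpose_mul, hMt, Matrix.mul_assoc]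
        _ = Matrix.of ginv := by rw [hMN, Matrix.transpose_one, Matrix.one_mul]
    intro a b
    have h := congrFun (congrFun hNt b) a
    simpa [Matrix.transpose_apply] using h
  have hρω : (∑ a, ∑ b, ginv a b * ρ a * ω b) = 0 := by
    rw [Finset.sum_comm, ← hωρ]
    exact Finset.sum_congr rfl fun x _ => Finset.sum_congr rfl fun y _ => by rw [hsym y x]; ring
  -- one-index contraction facts
  have hcωω : (∑ p, ω p * ∑ q, ginv p q * ω q) = εω := by
    rw [← hωω]
    exact Finset.sum_congr rfl fun p _ => by
      rw [Finset.mul_sum]; exact Finset.sum_congr rfl fun q _ => by ring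
  have hcωρ : (∑ p, ω p * ∑ q, ginv p q * ρ q) = 0 := by
    rw [← hωρ]
    exact Finset.sum_congr rfl fun p _ => by
      rw [Finset.mul_sum]; exact Finset.sum_congr rfl fun q _ => by ring
  have hcρω : (∑ p, ρ p * ∑ q, ginv p q * ω q) = 0 := by
    rw [← hρω]
    exact Finset.sum_congr rfl fun p _ => by
      rw [Finset.mul_sum]; exact Finset.sum_congr rfl fun q _ => by ring
  have hcρρ : (∑ p, ρ p * ∑ q, ginv p q * ρ q) = ερ := by
    rw [← hρρ]
    exact Finset.sum_congr rfl fun p _ => by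
      rw [Finset.mul_sum]; exact Finset.sum_congr rfl fun q _ => by ring
  -- the Ricci tensor
  have hRic : ∀ a b, Ricci n ginv (typeIIR n A ω ρ) a b
      = -(A * ερ) * (ω a * ω b) + -(A * εω) * (ρ a * ρ b) := by
    intro a b
    calc Ricci n ginv (typeIIR n A ω ρ) a b
        = ∑ p, ∑ q, ginv p q * typeIIR n A ω ρ p a q b := rfl
      _ = ∑ p, ((A * (ω p * ρ a - ω a * ρ p) * ω b) * (∑ q, ginv p q * ρ q)
            + (-(A * (ω p * ρ a - ω a * ρ p) * ρ b)) * (∑ q, ginv p q * ω q)) :=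
          Finset.sum_congr rfl fun p _ => sum_comb2 fun q => by simp only [typeIIR]; ring
      _ = (A * ρ a * ω b) * (∑ p, ω p * ∑ q, ginv p q * ρ q)
            + (-(A * ω a * ω b)) * (∑ p, ρ p * ∑ q, ginv p q * ρ q)
            + (-(A * ρ a * ρ b)) * (∑ p, ω p * ∑ q, ginv p q * ω q)
            + (A * ω a * ρ b) * (∑ p, ρ p * ∑ q, ginv p q * ω q) :=
          sum_comb4 fun p => by ring
      _ = _ := by rw [hcωρ, hcρρ, hcωω, hcρω]; ring
  -- the scalar curvature
  have hScal : Scal n ginv (typeIIR n A ω ρ) = -2 * ερ * εω * A := by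
    calc Scal n ginv (typeIIR n A ω ρ)
        = ∑ a, ∑ b, ginv a b * Ricci n ginv (typeIIR n A ω ρ) a b := rfl
      _ = ∑ a, ((-(A * ερ) * ω a) * (∑ b, ginv a b * ω b)
            + (-(A * εω) * ρ a) * (∑ b, ginv a b * ρ b)) :=
          Finset.sum_congr rfl fun a _ => sum_comb2 fun b => by rw [hRic a b]; ring
      _ = (-(A * ερ)) * (∑ a, ω a * ∑ b, ginv a b * ω b)
            + (-(A * εω)) * (∑ a, ρ a * ∑ b, ginv a b * ρ b) :=
          sum_comb2 fun a => by ring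
      _ = _ := by rw [hcωω, hcρρ]; ring
  -- mixed Ricci
  have hRm : ∀ a b, (∑ t, ginv a t * Ricci n ginv (typeIIR n A ω ρ) t b)
      = (-(A * ερ) * ω b) * (∑ t, ginv a t * ω t) + (-(A * εω) * ρ b) * (∑ t, ginv a t * ρ t) :=
    fun a b => sum_comb2 fun t => by rw [hRic t b]; ring
  -- fully raised Ricci
  have hRicup : ∀ a b, (∑ p, ∑ q, ginv a p * ginv b q * Ricci n ginv (typeIIR n A ω ρ) p q)
      = (-(A * ερ)) * ((∑ p, ginv a p * ω p) * (∑ q, ginv b q * ω q))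
        + (-(A * εω)) * ((∑ p, ginv a p * ρ p) * (∑ q, ginv b q * ρ q)) := by
    intro a b
    calc (∑ p, ∑ q, ginv a p * ginv b q * Ricci n ginv (typeIIR n A ω ρ) p q)
        = ∑ p, ((-(A * ερ) * (ginv a p * ω p)) * (∑ q, ginv b q * ω q)
            + (-(A * εω) * (ginv a p * ρ p)) * (∑ q, ginv b q * ρ q)) :=
          Finset.sum_congr rfl fun p _ => sum_comb2 fun q => by rw [hRic p q]; ring
      _ = (-(A * ερ) * (∑ q, ginv b q * ω q)) * (∑ p, ginv a p * ω p)
            + (-(A * εω) * (∑ q, ginv b q * ρ q)) * (∑ p, ginv a p * ρ p) :=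
          sum_comb2 fun p => by ring
      _ = _ := by ring
  -- R with last two indices raised
  have hRlast : ∀ a b l m, (∑ s, ∑ t, ginv l s * ginv m t * typeIIR n A ω ρ a b s t)
      = A * (ω a * ρ b - ω b * ρ a) *
        ((∑ s, ginv l s * ρ s) * (∑ t, ginv m t * ω t)
          - (∑ s, ginv l s * ω s) * (∑ t, ginv m t * ρ t)) := by
    intro a b l m
    calc (∑ s, ∑ t, ginv l s * ginv m t * typeIIR n A ω ρ a b s t)
        = ∑ s, ((A * (ω a * ρ b - ω b * ρ a) * (ginv l s * ρ s)) * (∑ t, ginv m t * ω t)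
            + (-(A * (ω a * ρ b - ω b * ρ a) * (ginv l s * ω s))) * (∑ t, ginv m t * ρ t)) :=
          Finset.sum_congr rfl fun s _ => sum_comb2 fun t => by simp only [typeIIR]; ring
      _ = (A * (ω a * ρ b - ω b * ρ a) * (∑ t, ginv m t * ω t)) * (∑ s, ginv l s * ρ s)
            + (-(A * (ω a * ρ b - ω b * ρ a) * (∑ t, ginv m t * ρ t))) * (∑ s, ginv l s * ω s) :=
          sum_comb2 fun s => by ring
      _ = _ := by ring
  -- R with all indices raised
  have hRallup : ∀ p q l m,
      (∑ s, ∑ t, ginv p s * ginv q t * ∑ u, ∑ v, ginv l u * ginv m v * typeIIR n A ω ρ s t u v)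
      = A * ((∑ s, ginv p s * ω s) * (∑ t, ginv q t * ρ t)
            - (∑ s, ginv p s * ρ s) * (∑ t, ginv q t * ω t)) *
        ((∑ s, ginv l s * ρ s) * (∑ t, ginv m t * ω t)
          - (∑ s, ginv l s * ω s) * (∑ t, ginv m t * ρ t)) := by
    intro p q l m
    calc (∑ s, ∑ t, ginv p s * ginv q t * ∑ u, ∑ v, ginv l u * ginv m v * typeIIR n A ω ρ s t u v)
        = ∑ s, ∑ t, ginv p s * ginv q t * (A * (ω s * ρ t - ω t * ρ s) *
            ((∑ u, ginv l u * ρ u) * (∑ v, ginv m v * ω v)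
              - (∑ u, ginv l u * ω u) * (∑ v, ginv m v * ρ v))) :=
          Finset.sum_congr rfl fun s _ => Finset.sum_congr rfl fun t _ => by rw [hRlast s t l m]
      _ = ∑ s, ((A * ((∑ u, ginv l u * ρ u) * (∑ v, ginv m v * ω v)
              - (∑ u, ginv l u * ω u) * (∑ v, ginv m v * ρ v)) * (ginv p s * ω s))
              * (∑ t, ginv q t * ρ t)
            + (-(A * ((∑ u, ginv l u * ρ u) * (∑ v, ginv m v * ω v)
              - (∑ u, ginv l u * ω u) * (∑ v, ginv m v * ρ v)) * (ginv p s * ρ s)))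
              * (∑ t, ginv q t * ω t)) :=
          Finset.sum_congr rfl fun s _ => sum_comb2 fun t => by ring
      _ = (A * ((∑ u, ginv l u * ρ u) * (∑ v, ginv m v * ω v)
              - (∑ u, ginv l u * ω u) * (∑ v, ginv m v * ρ v)) * (∑ t, ginv q t * ρ t))
              * (∑ s, ginv p s * ω s)
            + (-(A * ((∑ u, ginv l u * ρ u) * (∑ v, ginv m v * ω v)
              - (∑ u, ginv l u * ω u) * (∑ v, ginv m v * ρ v)) * (∑ t, ginv q t * ω t)))
              * (∑ s, ginv p s * ρ s) :=
          sum_comb2 fun s => by ring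
      _ = _ := by ring
  -- double contraction facts
  have hG : (∑ p, ∑ q, (ρ p * ω q - ρ q * ω p) *
      ((∑ s, ginv p s * ω s) * (∑ t, ginv q t * ρ t)
        - (∑ s, ginv p s * ρ s) * (∑ t, ginv q t * ω t))) = -(2 * (εω * ερ)) := by
    calc (∑ p, ∑ q, (ρ p * ω q - ρ q * ω p) *
        ((∑ s, ginv p s * ω s) * (∑ t, ginv q t * ρ t)
          - (∑ s, ginv p s * ρ s) * (∑ t, ginv q t * ω t)))
        = ∑ p, ((ρ p * (∑ s, ginv p s * ω s)) * (∑ q, ω q * ∑ t, ginv q t * ρ t)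
            + (-(ρ p * (∑ s, ginv p s * ρ s))) * (∑ q, ω q * ∑ t, ginv q t * ω t)
            + (-(ω p * (∑ s, ginv p s * ω s))) * (∑ q, ρ q * ∑ t, ginv q t * ρ t)
            + (ω p * (∑ s, ginv p s * ρ s)) * (∑ q, ρ q * ∑ t, ginv q t * ω t)) :=
          Finset.sum_congr rfl fun p _ => sum_comb4 fun q => by ring
      _ = ((∑ q, ω q * ∑ t, ginv q t * ρ t)) * (∑ p, ρ p * ∑ s, ginv p s * ω s)
            + (-(∑ q, ω q * ∑ t, ginv q t * ω t)) * (∑ p, ρ p * ∑ s, ginv p s * ρ s)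
            + (-(∑ q, ρ q * ∑ t, ginv q t * ρ t)) * (∑ p, ω p * ∑ s, ginv p s * ω s)
            + ((∑ q, ρ q * ∑ t, ginv q t * ω t)) * (∑ p, ω p * ∑ s, ginv p s * ρ s) :=
          sum_comb4 fun p => by ring
      _ = _ := by rw [hcωρ, hcωω, hcρρ, hcρω]; ring
  have hM : (∑ l, ∑ m, ((∑ s, ginv l s * ρ s) * (∑ t, ginv m t * ω t)
        - (∑ s, ginv l s * ω s) * (∑ t, ginv m t * ρ t)) * (ρ l * ω m - ρ m * ω l))
      = 2 * (εω * ερ) := by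
    calc (∑ l, ∑ m, ((∑ s, ginv l s * ρ s) * (∑ t, ginv m t * ω t)
          - (∑ s, ginv l s * ω s) * (∑ t, ginv m t * ρ t)) * (ρ l * ω m - ρ m * ω l))
        = ∑ l, ((ρ l * (∑ s, ginv l s * ρ s)) * (∑ m, ω m * ∑ t, ginv m t * ω t)
            + (-(ω l * (∑ s, ginv l s * ρ s))) * (∑ m, ρ m * ∑ t, ginv m t * ω t)
            + (-(ρ l * (∑ s, ginv l s * ω s))) * (∑ m, ω m * ∑ t, ginv m t * ρ t)
            + (ω l * (∑ s, ginv l s * ω s)) * (∑ m, ρ m * ∑ t, ginv m t * ρ t)) :=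
          Finset.sum_congr rfl fun l _ => sum_comb4 fun m => by ring
      _ = ((∑ m, ω m * ∑ t, ginv m t * ω t)) * (∑ l, ρ l * ∑ s, ginv l s * ρ s)
            + (-(∑ m, ρ m * ∑ t, ginv m t * ω t)) * (∑ l, ω l * ∑ s, ginv l s * ρ s)
            + (-(∑ m, ω m * ∑ t, ginv m t * ρ t)) * (∑ l, ρ l * ∑ s, ginv l s * ω s)
            + ((∑ m, ρ m * ∑ t, ginv m t * ρ t)) * (∑ l, ω l * ∑ s, ginv l s * ω s) :=
          sum_comb4 fun l => by ring
      _ = _ := by rw [hcωω, hcρω, hcωρ, hcρρ]; ring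
  have hFD : (∑ a, ∑ b, ((∑ s, ginv a s * ω s) * (∑ t, ginv b t * ρ t)
        - (∑ s, ginv a s * ρ s) * (∑ t, ginv b t * ω t)) * (ω a * ρ b - ω b * ρ a))
      = 2 * (εω * ερ) := by
    calc (∑ a, ∑ b, ((∑ s, ginv a s * ω s) * (∑ t, ginv b t * ρ t)
          - (∑ s, ginv a s * ρ s) * (∑ t, ginv b t * ω t)) * (ω a * ρ b - ω b * ρ a))
        = ∑ a, ((ω a * (∑ s, ginv a s * ω s)) * (∑ b, ρ b * ∑ t, ginv b t * ρ t)
            + (-(ρ a * (∑ s, ginv a s * ω s))) * (∑ b, ω b * ∑ t, ginv b t * ρ t)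
            + (-(ω a * (∑ s, ginv a s * ρ s))) * (∑ b, ρ b * ∑ t, ginv b t * ω t)
            + (ρ a * (∑ s, ginv a s * ρ s)) * (∑ b, ω b * ∑ t, ginv b t * ω t)) :=
          Finset.sum_congr rfl fun a _ => sum_comb4 fun b => by ring
      _ = ((∑ b, ρ b * ∑ t, ginv b t * ρ t)) * (∑ a, ω a * ∑ s, ginv a s * ω s)
            + (-(∑ b, ω b * ∑ t, ginv b t * ρ t)) * (∑ a, ρ a * ∑ s, ginv a s * ω s)
            + (-(∑ b, ρ b * ∑ t, ginv b t * ω t)) * (∑ a, ω a * ∑ s, ginv a s * ρ s)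
            + ((∑ b, ω b * ∑ t, ginv b t * ω t)) * (∑ a, ρ a * ∑ s, ginv a s * ρ s) :=
          sum_comb4 fun a => by ring
      _ = _ := by rw [hcρρ, hcωρ, hcρω, hcωω]; ring
  refine ⟨hScal, ?_, ?_, ?_, ?_, ?_, ?_, ?_⟩
  · -- S ≠ 0
    rw [hScal]
    rcases hεω with rfl | rfl <;> rcases hερ with rfl | rfl <;>
      · intro h; apply hA; linarith
  · -- Ricci formula
    intro a b
    rw [hRic a b, hScal]
    rcases hεω with rfl | rfl <;> rcases hερ with rfl | rfl <;> ring
  · -- (S/2) R = Ric∧Ric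
    intro a b l m
    rw [hScal, hRic a l, hRic b m, hRic a m, hRic b l]
    simp only [typeIIR]; ring
  · -- Ric∘Ric = (S/2) Ric
    intro a b
    beta_reduce
    calc (∑ s, (∑ t, ginv a t * Ricci n ginv (typeIIR n A ω ρ) t s)
          * (∑ t, ginv s t * Ricci n ginv (typeIIR n A ω ρ) t b))
        = (A * A * (ερ * ερ) * (ω b * (∑ t, ginv a t * ω t))) * (∑ s, ω s * ∑ t, ginv s t * ω t)
          + (A * A * (ερ * εω) * (ρ b * (∑ t, ginv a t * ω t))) * (∑ s, ω s * ∑ t, ginv s t * ρ t)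
          + (A * A * (εω * ερ) * (ω b * (∑ t, ginv a t * ρ t))) * (∑ s, ρ s * ∑ t, ginv s t * ω t)
          + (A * A * (εω * εω) * (ρ b * (∑ t, ginv a t * ρ t))) * (∑ s, ρ s * ∑ t, ginv s t * ρ t) :=
          sum_comb4 fun s => by rw [hRm a s, hRm s b]; ring
      _ = _ := by rw [hcωω, hcωρ, hcρω, hcρρ, hScal, hRm a b]; ring
  · -- Ric_{ab} Ric^{ab} = S^2/2
    calc (∑ a, ∑ b, (∑ p, ∑ q, ginv a p * ginv b q * Ricci n ginv (typeIIR n A ω ρ) p q)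
          * Ricci n ginv (typeIIR n A ω ρ) a b)
        = ∑ a, ((A * A * (ερ * ερ) * (ω a * (∑ p, ginv a p * ω p))) * (∑ b, ω b * ∑ q, ginv b q * ω q)
            + (A * A * (ερ * εω) * (ρ a * (∑ p, ginv a p * ω p))) * (∑ b, ρ b * ∑ q, ginv b q * ω q)
            + (A * A * (εω * ερ) * (ω a * (∑ p, ginv a p * ρ p))) * (∑ b, ω b * ∑ q, ginv b q * ρ q)
            + (A * A * (εω * εω) * (ρ a * (∑ p, ginv a p * ρ p))) * (∑ b, ρ b * ∑ q, ginv b q * ρ q)) :=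
          Finset.sum_congr rfl fun a _ => sum_comb4 fun b => by rw [hRicup a b, hRic a b]; ring
      _ = (A * A * (ερ * ερ) * (∑ b, ω b * ∑ q, ginv b q * ω q)) * (∑ a, ω a * ∑ p, ginv a p * ω p)
            + (A * A * (ερ * εω) * (∑ b, ρ b * ∑ q, ginv b q * ω q)) * (∑ a, ρ a * ∑ p, ginv a p * ω p)
            + (A * A * (εω * ερ) * (∑ b, ω b * ∑ q, ginv b q * ρ q)) * (∑ a, ω a * ∑ p, ginv a p * ρ p)
            + (A * A * (εω * εω) * (∑ b, ρ b * ∑ q, ginv b q * ρ q)) * (∑ a, ρ a * ∑ p, ginv a p * ρ p) :=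
          sum_comb4 fun a => by ring
      _ = _ := by rw [hcωω, hcρω, hcωρ, hcρρ, hScal]; ring
  · -- R R^{..} = S R^{..}
    intro a b l m
    beta_reduce
    calc (∑ p, ∑ q, typeIIR n A ω ρ a b p q *
          ∑ s, ∑ t, ginv p s * ginv q t * ∑ u, ∑ v, ginv l u * ginv m v * typeIIR n A ω ρ s t u v)
        = ∑ p, ∑ q, (A * (ω a * ρ b - ω b * ρ a) * A *
            ((∑ u, ginv l u * ρ u) * (∑ v, ginv m v * ω v)
              - (∑ u, ginv l u * ω u) * (∑ v, ginv m v * ρ v))) *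
            ((ρ p * ω q - ρ q * ω p) *
              ((∑ s, ginv p s * ω s) * (∑ t, ginv q t * ρ t)
                - (∑ s, ginv p s * ρ s) * (∑ t, ginv q t * ω t))) :=
          Finset.sum_congr rfl fun p _ => Finset.sum_congr rfl fun q _ => by
            rw [hRallup p q l m]; simp only [typeIIR]; ring
      _ = (A * (ω a * ρ b - ω b * ρ a) * A *
            ((∑ u, ginv l u * ρ u) * (∑ v, ginv m v * ω v)
              - (∑ u, ginv l u * ω u) * (∑ v, ginv m v * ρ v))) *
          (∑ p, ∑ q, (ρ p * ω q - ρ q * ω p) *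
              ((∑ s, ginv p s * ω s) * (∑ t, ginv q t * ρ t)
                - (∑ s, ginv p s * ρ s) * (∑ t, ginv q t * ω t))) := sum_pull2 _ _
      _ = _ := by rw [hG, hScal, hRlast a b l m]; ring
  · -- R R^{....} = S^2
    beta_reduce
    calc (∑ a, ∑ b, ∑ l, ∑ m,
          (∑ s, ∑ t, ginv a s * ginv b t * ∑ u, ∑ v, ginv l u * ginv m v * typeIIR n A ω ρ s t u v)
            * typeIIR n A ω ρ a b l m)
        = ∑ a, ∑ b, ((A * A * ((∑ s, ginv a s * ω s) * (∑ t, ginv b t * ρ t)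
              - (∑ s, ginv a s * ρ s) * (∑ t, ginv b t * ω t)) * (ω a * ρ b - ω b * ρ a)) *
            (∑ l, ∑ m, ((∑ s, ginv l s * ρ s) * (∑ t, ginv m t * ω t)
              - (∑ s, ginv l s * ω s) * (∑ t, ginv m t * ρ t)) * (ρ l * ω m - ρ m * ω l))) :=
          Finset.sum_congr rfl fun a _ => Finset.sum_congr rfl fun b _ =>
            (calc (∑ l, ∑ m,
                (∑ s, ∑ t, ginv a s * ginv b t * ∑ u, ∑ v, ginv l u * ginv m v * typeIIR n A ω ρ s t u v)
                  * typeIIR n A ω ρ a b l m)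
                = ∑ l, ∑ m, (A * A * ((∑ s, ginv a s * ω s) * (∑ t, ginv b t * ρ t)
                    - (∑ s, ginv a s * ρ s) * (∑ t, ginv b t * ω t)) * (ω a * ρ b - ω b * ρ a)) *
                    (((∑ s, ginv l s * ρ s) * (∑ t, ginv m t * ω t)
                      - (∑ s, ginv l s * ω s) * (∑ t, ginv m t * ρ t)) * (ρ l * ω m - ρ m * ω l)) :=
                  Finset.sum_congr rfl fun l _ => Finset.sum_congr rfl fun m _ => by
                    rw [hRallup a b l m]; simp only [typeIIR]; ring
              _ = (A * A * ((∑ s, ginv a s * ω s) * (∑ t, ginv b t * ρ t)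
                    - (∑ s, ginv a s * ρ s) * (∑ t, ginv b t * ω t)) * (ω a * ρ b - ω b * ρ a)) *
                  (∑ l, ∑ m, ((∑ s, ginv l s * ρ s) * (∑ t, ginv m t * ω t)
                    - (∑ s, ginv l s * ω s) * (∑ t, ginv m t * ρ t)) * (ρ l * ω m - ρ m * ω l)) :=
                sum_pull2 _ _)
      _ = ∑ a, ∑ b, (A * A * (2 * (εω * ερ))) *
            (((∑ s, ginv a s * ω s) * (∑ t, ginv b t * ρ t)
              - (∑ s, ginv a s * ρ s) * (∑ t, ginv b t * ω t)) * (ω a * ρ b - ω b * ρ a)) := by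
          rw [hM]
          exact Finset.sum_congr rfl fun a _ => Finset.sum_congr rfl fun b _ => by ring
      _ = (A * A * (2 * (εω * ερ))) *
            (∑ a, ∑ b, ((∑ s, ginv a s * ω s) * (∑ t, ginv b t * ρ t)
              - (∑ s, ginv a s * ρ s) * (∑ t, ginv b t * ω t)) * (ω a * ρ b - ω b * ρ a)) :=
          sum_pull2 _ _
      _ = _ := by rw [hFD, hScal]; ring
end

section
/- Let (V,g) be a real vector space with nondegenerate symmetric bilinear form, ω,ρ ∈ V* with g(ω,ω)=0, g(ρ,ρ)=ε=±1, g(ω,ρ)=0, and ω,ρ linearly independent. Let R_{αβλμ} = 4A ω_{[α}ρ_{β]}ρ_{[λ}ω_{μ]}. Then the scalar curvature S = 0, the Ricci tensor is Ric_{αβ} = −εA ω_αω_β, and R_{αρ}R^ρ_β = 0, R_{αβ}R^{αβ} = 0, R_{αβλμ}R^{αβλμ} = 0. -/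
open scoped BigOperators

/-- Type II_{N_ε} spaces: `ω` null, `g(ρ,ρ)=ε=±1`, `g(ω,ρ)=0`, `ω,ρ` linearly
independent, and `R = 4A ω_{[α}ρ_{β]}ρ_{[λ}ω_{μ]}`.  Then `S = 0`,
`Ric_{αβ} = −εA ω_αω_β`, and `Ric_{αρ}Ric^ρ_β = 0`, `Ric_{αβ}Ric^{αβ} = 0`,
`R_{αβλμ}R^{αβλμ} = 0`. -/
theorem stmt9 (n : ℕ) (g ginv : Fin n → Fin n → ℝ)
    (hgsymm : ∀ a b, g a b = g b a)
    (hginv : ∀ a b, (∑ p, g a p * ginv p b) = if a = b then 1 else 0)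
    (A : ℝ) (ω ρ : Fin n → ℝ) (hind : LinearIndependent ℝ ![ω, ρ]) (ε : ℝ)
    (hε : ε = 1 ∨ ε = -1)
    (hωω : (∑ a, ∑ b, ginv a b * ω a * ω b) = 0)
    (hρρ : (∑ a, ∑ b, ginv a b * ρ a * ρ b) = ε)
    (hωρ : (∑ a, ∑ b, ginv a b * ω a * ρ b) = 0) :
    letI R := typeIIR n A ω ρ
    letI Ric := Ricci n ginv R
    Scal n ginv R = 0 ∧
    (∀ a b, Ric a b = -ε * A * ω a * ω b) ∧
    (∀ a b, (∑ p, ∑ t, Ric a p * ginv p t * Ric t b) = 0) ∧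
    (∑ a, ∑ b, (∑ p, ∑ q, ginv a p * ginv b q * Ric p q) * Ric a b) = 0 ∧
    (∑ a, ∑ b, ∑ l, ∑ m,
      (∑ p, ∑ q, ∑ r, ∑ s,
        ginv a p * ginv b q * ginv l r * ginv m s * R p q r s) * R a b l m) = 0 := by
  classical
  -- symmetry of ginv
  have hsymm : ∀ a b, ginv a b = ginv b a := by
    let G : Matrix (Fin n) (Fin n) ℝ := Matrix.of g
    let Gi : Matrix (Fin n) (Fin n) ℝ := Matrix.of ginv
    have h1 : G * Gi = 1 := by
      ext a b
      simpa [Matrix.mul_apply, Matrix.one_apply, G, Gi] using hginv a b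
    have h2 : Gi.transpose * G = 1 := by
      ext a b
      have := hginv b a
      simp only [Matrix.mul_apply, Matrix.one_apply, Matrix.transpose_apply, G, Gi,
        Matrix.of_apply]
      rw [show (∑ j, ginv j a * g j b) = ∑ j, g b j * ginv j a from
        Finset.sum_congr rfl fun j _ => by rw [hgsymm]; ring, this]
      by_cases h : a = b <;> simp [h, eq_comm]
    have h3 : Gi.transpose = Gi := by
      calc Gi.transpose = Gi.transpose * (G * Gi) := by rw [h1, mul_one]
      _ = (Gi.transpose * G) * Gi := by rw [mul_assoc]
      _ = Gi := by rw [h2, one_mul]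
    intro a b
    have := congrFun (congrFun (congrArg Matrix.of.symm h3) b) a
    simpa [Matrix.transpose_apply, Gi] using this
  have hρω : (∑ a, ∑ b, ginv a b * ρ a * ω b) = 0 := by
    rw [← hωρ, Finset.sum_comm]
    exact Finset.sum_congr rfl fun b _ => Finset.sum_congr rfl fun a _ => by
      rw [hsymm]; ring
  -- contractions with one index raised
  have hWω : (∑ a, (∑ p, ginv a p * ω p) * ω a) = 0 := by
    rw [← hωω]
    simp only [Finset.sum_mul]
    exact Finset.sum_congr rfl fun a _ => Finset.sum_congr rfl fun p _ => by ring
  have hWρ : (∑ a, (∑ p, ginv a p * ω p) * ρ a) = 0 := by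
    rw [← hρω]
    simp only [Finset.sum_mul]
    exact Finset.sum_congr rfl fun a _ => Finset.sum_congr rfl fun p _ => by ring
  have hPω : (∑ a, (∑ p, ginv a p * ρ p) * ω a) = 0 := by
    rw [← hωρ]
    simp only [Finset.sum_mul]
    exact Finset.sum_congr rfl fun a _ => Finset.sum_congr rfl fun p _ => by ring
  have hPρ : (∑ a, (∑ p, ginv a p * ρ p) * ρ a) = ε := by
    rw [← hρρ]
    simp only [Finset.sum_mul]
    exact Finset.sum_congr rfl fun a _ => Finset.sum_congr rfl fun p _ => by ring
  -- Ricci formula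
  have hRic : ∀ a b, Ricci n ginv (typeIIR n A ω ρ) a b = -ε * A * ω a * ω b := by
    intro a b
    unfold Ricci typeIIR
    have key : ∀ p q : Fin n, ginv p q * (A * (ω p * ρ a - ω a * ρ p) * (ρ q * ω b - ρ b * ω q)) =
        A * ρ a * ω b * (ginv p q * ω p * ρ q) - A * ρ a * ρ b * (ginv p q * ω p * ω q)
        - A * ω a * ω b * (ginv p q * ρ p * ρ q) + A * ω a * ρ b * (ginv p q * ρ p * ω q) := by
      intro p q; ring
    simp only [key, Finset.sum_add_distrib, Finset.sum_sub_distrib, ← Finset.mul_sum]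
    rw [hωω, hρρ, hωρ, hρω]
    ring
  refine ⟨?_, hRic, ?_, ?_, ?_⟩
  · -- scalar curvature
    unfold Scal
    have key : ∀ a b : Fin n, ginv a b * Ricci n ginv (typeIIR n A ω ρ) a b =
        (-ε * A) * (ginv a b * ω a * ω b) := by
      intro a b; rw [hRic]; ring
    simp only [key, ← Finset.mul_sum]
    rw [show (∑ a, ∑ b, ginv a b * ω a * ω b) = 0 from hωω, mul_zero]
  · -- Ric squared (mixed)
    intro a b
    have key : ∀ p t : Fin n, Ricci n ginv (typeIIR n A ω ρ) a p * ginv p t *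
        Ricci n ginv (typeIIR n A ω ρ) t b =
        (ε * A * ε * A * ω a * ω b) * (ginv p t * ω p * ω t) := by
      intro p t; rw [hRic, hRic]; ring
    simp only [key, ← Finset.mul_sum]
    rw [hωω, mul_zero]
  · -- Ric fully contracted
    have hinner : ∀ a b : Fin n,
        (∑ p, ∑ q, ginv a p * ginv b q * Ricci n ginv (typeIIR n A ω ρ) p q) =
        (-ε * A) * ((∑ p, ginv a p * ω p) * (∑ q, ginv b q * ω q)) := by
      intro a b
      have key : ∀ p q : Fin n, ginv a p * ginv b q * Ricci n ginv (typeIIR n A ω ρ) p q =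
          (-ε * A) * ((ginv a p * ω p) * (ginv b q * ω q)) := by
        intro p q; rw [hRic]; ring
      simp only [key, ← Finset.mul_sum, ← Finset.sum_mul]
    have key : ∀ a b : Fin n,
        (∑ p, ∑ q, ginv a p * ginv b q * Ricci n ginv (typeIIR n A ω ρ) p q) *
          Ricci n ginv (typeIIR n A ω ρ) a b =
        (ε * A * ε * A * ((∑ p, ginv a p * ω p) * ω a)) * ((∑ q, ginv b q * ω q) * ω b) := by
      intro a b; rw [hinner, hRic]; ring
    simp only [key, ← Finset.mul_sum, ← Finset.sum_mul]
    rw [hWω]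
    ring
  · -- Riemann fully contracted
    have hRraise : ∀ a b l m : Fin n,
        (∑ p, ∑ q, ∑ r, ∑ s,
          ginv a p * ginv b q * ginv l r * ginv m s * typeIIR n A ω ρ p q r s) =
        A * ((∑ p, ginv a p * ω p) * (∑ q, ginv b q * ρ q)
              - (∑ p, ginv b p * ω p) * (∑ q, ginv a q * ρ q))
          * ((∑ r, ginv l r * ρ r) * (∑ s, ginv m s * ω s)
              - (∑ r, ginv m r * ρ r) * (∑ s, ginv l s * ω s)) := by
      intro a b l m
      unfold typeIIR
      have key : ∀ p q r s : Fin n,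
          ginv a p * ginv b q * ginv l r * ginv m s *
            (A * (ω p * ρ q - ω q * ρ p) * (ρ r * ω s - ρ s * ω r)) =
          A * ((ginv a p * ω p) * ((ginv b q * ρ q) * ((ginv l r * ρ r) * (ginv m s * ω s))))
          - A * ((ginv a p * ω p) * ((ginv b q * ρ q) * ((ginv m s * ρ s) * (ginv l r * ω r))))
          - A * ((ginv a p * ρ p) * ((ginv b q * ω q) * ((ginv l r * ρ r) * (ginv m s * ω s))))
          + A * ((ginv a p * ρ p) * ((ginv b q * ω q) * ((ginv m s * ρ s) * (ginv l r * ω r)))) := by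
        intro p q r s; ring
      simp only [key, Finset.sum_add_distrib, Finset.sum_sub_distrib,
        ← Finset.mul_sum, ← Finset.sum_mul]
      ring
    have hXX : (∑ a, ∑ b,
        ((∑ p, ginv a p * ω p) * (∑ q, ginv b q * ρ q)
          - (∑ p, ginv b p * ω p) * (∑ q, ginv a q * ρ q)) * (ω a * ρ b - ω b * ρ a)) = 0 := by
      have key : ∀ a b : Fin n,
          ((∑ p, ginv a p * ω p) * (∑ q, ginv b q * ρ q)
            - (∑ p, ginv b p * ω p) * (∑ q, ginv a q * ρ q)) * (ω a * ρ b - ω b * ρ a) =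
          ((∑ p, ginv a p * ω p) * ω a) * ((∑ q, ginv b q * ρ q) * ρ b)
          - ((∑ q, ginv a q * ρ q) * ω a) * ((∑ p, ginv b p * ω p) * ρ b)
          - ((∑ p, ginv a p * ω p) * ρ a) * ((∑ q, ginv b q * ρ q) * ω b)
          + ((∑ q, ginv a q * ρ q) * ρ a) * ((∑ p, ginv b p * ω p) * ω b) := by
        intro a b; ring
      simp only [key, Finset.sum_add_distrib, Finset.sum_sub_distrib,
        ← Finset.mul_sum, ← Finset.sum_mul]
      rw [hWω, hWρ, hPω, hPρ]
      ring
    have key : ∀ a b l m : Fin n,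
        (∑ p, ∑ q, ∑ r, ∑ s,
          ginv a p * ginv b q * ginv l r * ginv m s * typeIIR n A ω ρ p q r s) *
          typeIIR n A ω ρ a b l m =
        ((A * A) * (((∑ p, ginv a p * ω p) * (∑ q, ginv b q * ρ q)
            - (∑ p, ginv b p * ω p) * (∑ q, ginv a q * ρ q)) * (ω a * ρ b - ω b * ρ a))) *
          (((∑ r, ginv l r * ρ r) * (∑ s, ginv m s * ω s)
            - (∑ r, ginv m r * ρ r) * (∑ s, ginv l s * ω s)) * (ρ l * ω m - ρ m * ω l)) := by
      intro a b l m
      rw [hRraise]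
      unfold typeIIR
      ring
    simp only [key, ← Finset.mul_sum, ← Finset.sum_mul]
    rw [hXX]
    ring
end

section
/- Let (M,g) be a semi-Riemannian manifold admitting a vector field X with ∇_Y X = cY for all Y (c ∈ ℝ, c ≠ 0), and suppose the curvature satisfies the first-order recurrence ∇_λ R^α_{βμν} = t̄_λ R^α_{βμν} for some one-form t̄. Then (M,g) is flat: R = 0. -/
open scoped BigOperators

/-- Component model of a semi-Riemannian manifold in a local chart: `F` is the
commutative ℝ-algebra of smooth functions, `pd i` are the coordinate partial
derivatives (commuting derivations vanishing on constants), `g` the components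
of a nondegenerate symmetric metric with inverse `ginv`, and `Γ` the Christoffel
symbols `Γ^a_{lm}` of its Levi-Civita connection (symmetric and metric). -/
structure ChartModel (n : ℕ) (F : Type) [CommRing F] [Algebra ℝ F] where
  pd : Fin n → F → F
  pd_add : ∀ i f₁ f₂, pd i (f₁ + f₂) = pd i f₁ + pd i f₂
  pd_mul : ∀ i f₁ f₂, pd i (f₁ * f₂) = pd i f₁ * f₂ + f₁ * pd i f₂
  pd_const : ∀ i (r : ℝ), pd i (algebraMap ℝ F r) = 0
  pd_comm : ∀ i j f, pd i (pd j f) = pd j (pd i f)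
  g : Fin n → Fin n → F
  ginv : Fin n → Fin n → F
  g_symm : ∀ a b, g a b = g b a
  ginv_symm : ∀ a b, ginv a b = ginv b a
  g_ginv : ∀ a b, (∑ p, g a p * ginv p b) = if a = b then 1 else 0
  Γ : Fin n → Fin n → Fin n → F
  Γ_symm : ∀ a l m, Γ a l m = Γ a m l
  Γ_metric : ∀ l a b, pd l (g a b) = (∑ p, Γ p l a * g p b) + ∑ p, Γ p l b * g a p

namespace ChartModel

variable {n : ℕ} {F : Type} [CommRing F] [Algebra ℝ F]

/-- The Riemann curvature tensor `R^a_{blm}` of the chart model. -/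
def curv (M : ChartModel n F) (a b l m : Fin n) : F :=
  M.pd l (M.Γ a m b) - M.pd m (M.Γ a l b)
    + (∑ p, M.Γ a l p * M.Γ p m b) - ∑ p, M.Γ a m p * M.Γ p l b

end ChartModel

open ChartModel

/-- The covariant derivative `∇_σ R^a_{blm}` of the curvature tensor. -/
def covCurv {n : ℕ} {F : Type} [CommRing F] [Algebra ℝ F]
    (M : ChartModel n F) (σ a b l m : Fin n) : F :=
  M.pd σ (M.curv a b l m) + (∑ p, M.Γ a σ p * M.curv p b l m)
    - (∑ p, M.Γ p σ b * M.curv a p l m) - (∑ p, M.Γ p σ l * M.curv a b p m)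
    - ∑ p, M.Γ p σ m * M.curv a b l p

section Aux

variable {n : ℕ} {F : Type} [CommRing F] [Algebra ℝ F] (M : ChartModel n F)

theorem aux_pd_zero (i : Fin n) : M.pd i 0 = 0 := by
  have h := M.pd_const i 0
  simpa using h

theorem aux_pd_neg (i : Fin n) (f : F) : M.pd i (-f) = -M.pd i f := by
  have h := M.pd_add i f (-f)
  rw [add_neg_cancel, aux_pd_zero] at h
  linear_combination -h

theorem aux_pd_sub (i : Fin n) (f g : F) : M.pd i (f - g) = M.pd i f - M.pd i g := by
  rw [sub_eq_add_neg, M.pd_add, aux_pd_neg, sub_eq_add_neg]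

theorem aux_pd_sum {ι : Type*} (i : Fin n) (s : Finset ι) (f : ι → F) :
    M.pd i (∑ x ∈ s, f x) = ∑ x ∈ s, M.pd i (f x) := by
  classical
  induction s using Finset.induction with
  | empty => simpa using aux_pd_zero M i
  | insert _ _ h ih => rw [Finset.sum_insert h, M.pd_add, ih, Finset.sum_insert h]

theorem aux_pd_ite (i : Fin n) (P : Prop) [Decidable P] (r s : ℝ) :
    M.pd i (if P then algebraMap ℝ F r else algebraMap ℝ F s) = 0 := by
  split_ifs <;> exact M.pd_const i _

/-- Ricci identity contraction: `R^a_{blm} X^b = 0` when `∇ X = c Id`. -/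
theorem aux_curv_contract (X : Fin n → F) (c : ℝ)
    (hX : ∀ a b, M.pd b (X a) + (∑ p, M.Γ a b p * X p) =
      if a = b then algebraMap ℝ F c else 0) :
    ∀ a l m, ∑ b, M.curv a b l m * X b = 0 := by
  classical
  set S : Fin n → Fin n → F := fun a m => ∑ p, M.Γ a m p * X p with hSdef
  have hS : ∀ a m, S a m = (if a = m then algebraMap ℝ F c else 0) - M.pd m (X a) := by
    intro a m
    have := hX a m
    rw [hSdef]
    linear_combination this
  have hpdX : ∀ a m, M.pd m (X a) = (if a = m then algebraMap ℝ F c else 0) - S a m := by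
    intro a m
    have := hX a m
    rw [hSdef]
    linear_combination this
  have key : ∀ a l m, ∑ b, M.pd l (M.Γ a m b) * X b =
      - M.pd l (M.pd m (X a)) - M.Γ a m l * algebraMap ℝ F c
        + ∑ p, M.Γ a m p * S p l := by
    intro a l m
    have h1 : M.pd l (S a m) = ∑ b, (M.pd l (M.Γ a m b) * X b + M.Γ a m b * M.pd l (X b)) := by
      rw [hSdef]
      rw [aux_pd_sum]
      exact Finset.sum_congr rfl fun b _ => M.pd_mul l _ _
    have h2 : M.pd l (S a m) = - M.pd l (M.pd m (X a)) := by
      rw [hS a m, aux_pd_sub]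
      have hite : M.pd l (if a = m then algebraMap ℝ F c else 0) = 0 := by
        split_ifs
        · exact M.pd_const l c
        · simpa using aux_pd_zero M l
      rw [hite]
      ring
    have h3 : ∑ b, M.Γ a m b * M.pd l (X b) =
        M.Γ a m l * algebraMap ℝ F c - ∑ b, M.Γ a m b * S b l := by
      have : ∀ b, M.Γ a m b * M.pd l (X b) =
          (if b = l then M.Γ a m b * algebraMap ℝ F c else 0) - M.Γ a m b * S b l := by
        intro b
        rw [hpdX b l]
        split_ifs <;> ring
      rw [Finset.sum_congr rfl fun b _ => this b, Finset.sum_sub_distrib,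
        Finset.sum_ite_eq' Finset.univ l (fun b => M.Γ a m b * algebraMap ℝ F c)]
      simp
    have h4 : ∑ b, (M.pd l (M.Γ a m b) * X b + M.Γ a m b * M.pd l (X b)) =
        (∑ b, M.pd l (M.Γ a m b) * X b) + ∑ b, M.Γ a m b * M.pd l (X b) :=
      Finset.sum_add_distrib
    have := h1
    rw [h2, h4, h3] at this
    linear_combination -this
  intro a l m
  have hexp : ∑ b, M.curv a b l m * X b =
      (∑ b, M.pd l (M.Γ a m b) * X b) - (∑ b, M.pd m (M.Γ a l b) * X b)
        + (∑ p, M.Γ a l p * S p m) - ∑ p, M.Γ a m p * S p l := by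
    have e1 : ∀ b, M.curv a b l m * X b =
        M.pd l (M.Γ a m b) * X b - M.pd m (M.Γ a l b) * X b
          + (∑ p, M.Γ a l p * (M.Γ p m b * X b)) - ∑ p, M.Γ a m p * (M.Γ p l b * X b) := by
      intro b
      rw [ChartModel.curv]
      simp only [sub_mul, add_mul, Finset.sum_mul, mul_assoc]
    rw [Finset.sum_congr rfl fun b _ => e1 b]
    rw [Finset.sum_sub_distrib, Finset.sum_add_distrib, Finset.sum_sub_distrib]
    congr 1
    · congr 1
      rw [Finset.sum_comm]
      exact Finset.sum_congr rfl fun p _ => (Finset.mul_sum _ _ _).symm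
    · rw [Finset.sum_comm]
      exact Finset.sum_congr rfl fun p _ => (Finset.mul_sum _ _ _).symm
  rw [hexp, key a l m, key a m l, M.pd_comm l m (X a), M.Γ_symm a m l]
  ring

end Aux

/-- If a semi-Riemannian manifold admits a vector field `X` with `∇_Y X = cY` for all
`Y` (`c ≠ 0`) and its curvature satisfies the first-order recurrence
`∇_λ R^α_{βμν} = t̄_λ R^α_{βμν}` for some one-form `t̄`, then the manifold is flat:
`R = 0`. -/
theorem stmt14 {n : ℕ} {F : Type} [CommRing F] [Algebra ℝ F]
    (M : ChartModel n F) (X : Fin n → F) (c : ℝ) (hc : c ≠ 0)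
    (hX : ∀ a b, M.pd b (X a) + (∑ p, M.Γ a b p * X p) =
      if a = b then algebraMap ℝ F c else 0)
    (t : Fin n → F)
    (hrec : ∀ σ a b l m, covCurv M σ a b l m = t σ * M.curv a b l m) :
    ∀ a b l m, M.curv a b l m = 0 := by
  classical
  have hA := aux_curv_contract M X c hX
  set S : Fin n → Fin n → F := fun a m => ∑ p, M.Γ a m p * X p with hSdef
  have hpdX : ∀ a m, M.pd m (X a) = (if a = m then algebraMap ℝ F c else 0) - S a m := by
    intro a m
    have := hX a m
    rw [hSdef]
    linear_combination this
  have key : ∀ σ a l m, algebraMap ℝ F c * M.curv a σ l m = 0 := by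
    intro σ a l m
    have h1 : ∑ b, covCurv M σ a b l m * X b = t σ * ∑ b, M.curv a b l m * X b := by
      rw [Finset.mul_sum]
      exact Finset.sum_congr rfl fun b _ => by rw [hrec σ a b l m]; ring
    rw [hA a l m, mul_zero] at h1
    -- expand covCurv in the sum
    have hexp : ∀ b, covCurv M σ a b l m * X b =
        M.pd σ (M.curv a b l m) * X b
          + (∑ p, M.Γ a σ p * (M.curv p b l m * X b))
          - (∑ p, M.Γ p σ b * M.curv a p l m) * X b
          - (∑ p, M.Γ p σ l * (M.curv a b p m * X b))
          - ∑ p, M.Γ p σ m * (M.curv a b l p * X b) := by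
      intro b
      rw [covCurv]
      simp only [sub_mul, add_mul, Finset.sum_mul, mul_assoc]
    rw [Finset.sum_congr rfl fun b _ => hexp b] at h1
    rw [Finset.sum_sub_distrib, Finset.sum_sub_distrib, Finset.sum_sub_distrib,
      Finset.sum_add_distrib] at h1
    -- T2 vanishes
    have hT2 : ∑ b, ∑ p, M.Γ a σ p * (M.curv p b l m * X b) = 0 := by
      rw [Finset.sum_comm]
      refine Finset.sum_eq_zero fun p _ => ?_
      rw [← Finset.mul_sum, hA p l m, mul_zero]
    have hT4 : ∑ b, ∑ p, M.Γ p σ l * (M.curv a b p m * X b) = 0 := by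
      rw [Finset.sum_comm]
      refine Finset.sum_eq_zero fun p _ => ?_
      rw [← Finset.mul_sum, hA a p m, mul_zero]
    have hT5 : ∑ b, ∑ p, M.Γ p σ m * (M.curv a b l p * X b) = 0 := by
      rw [Finset.sum_comm]
      refine Finset.sum_eq_zero fun p _ => ?_
      rw [← Finset.mul_sum, hA a l p, mul_zero]
    -- T1
    have hT1 : ∑ b, M.pd σ (M.curv a b l m) * X b =
        - (algebraMap ℝ F c * M.curv a σ l m) + ∑ b, M.curv a b l m * S b σ := by
      have hz : M.pd σ (∑ b, M.curv a b l m * X b) = 0 := by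
        rw [hA a l m]; simpa using aux_pd_zero M σ
      rw [aux_pd_sum] at hz
      have hz2 : ∑ b, (M.pd σ (M.curv a b l m) * X b + M.curv a b l m * M.pd σ (X b)) = 0 := by
        rw [← hz]
        exact Finset.sum_congr rfl fun b _ => (M.pd_mul σ _ _).symm
      rw [Finset.sum_add_distrib] at hz2
      have h5 : ∑ b, M.curv a b l m * M.pd σ (X b) =
          algebraMap ℝ F c * M.curv a σ l m - ∑ b, M.curv a b l m * S b σ := by
        have e : ∀ b, M.curv a b l m * M.pd σ (X b) =
            (if b = σ then M.curv a b l m * algebraMap ℝ F c else 0)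
              - M.curv a b l m * S b σ := by
          intro b
          rw [hpdX b σ]
          split_ifs <;> ring
        rw [Finset.sum_congr rfl fun b _ => e b, Finset.sum_sub_distrib,
          Finset.sum_ite_eq' Finset.univ σ (fun b => M.curv a b l m * algebraMap ℝ F c)]
        simp [mul_comm]
      rw [h5] at hz2
      linear_combination hz2
    -- T3
    have hT3 : ∑ b, (∑ p, M.Γ p σ b * M.curv a p l m) * X b =
        ∑ b, M.curv a b l m * S b σ := by
      have e : ∀ b, (∑ p, M.Γ p σ b * M.curv a p l m) * X b =
          ∑ p, M.curv a p l m * (M.Γ p σ b * X b) := by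
        intro b
        rw [Finset.sum_mul]
        exact Finset.sum_congr rfl fun p _ => by ring
      rw [Finset.sum_congr rfl fun b _ => e b, Finset.sum_comm]
      exact Finset.sum_congr rfl fun p _ => by rw [← Finset.mul_sum, hSdef]
    rw [hT1, hT2, hT3, hT4, hT5] at h1
    linear_combination -h1
  intro a b l m
  have h := key b a l m
  have hinv : algebraMap ℝ F c⁻¹ * (algebraMap ℝ F c * M.curv a b l m)
      = M.curv a b l m := by
    rw [← mul_assoc, ← map_mul, inv_mul_cancel₀ hc, map_one, one_mul]
  rw [← hinv, h, mul_zero]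
end

section
/- Let (M,g) be a semi-Riemannian manifold and T a nonzero smooth tensor field with ∇∇T = 0 (vanishing second covariant derivative). Define f := (1/2) g(T,T) (half the full metric contraction of T with itself) and X := grad f. Then Hess f is a parallel symmetric 2-tensor field: ∇(Hess f) = 0. Moreover Hess f(Y,Z) = g(∇_Y T, ∇_Z T) for all vector fields Y,Z. -/
open scoped BigOperators

namespace ChartModel

variable {n : ℕ} {F : Type} [CommRing F] [Algebra ℝ F]

/-- The covariant derivative `(∇T)_{σ idx} = ∇_σ T_{idx}` of a covariant `k`-tensor
field `T` (given by its components). -/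
def covT (M : ChartModel n F) {k : ℕ} (T : (Fin k → Fin n) → F)
    (σ : Fin n) (idx : Fin k → Fin n) : F :=
  M.pd σ (T idx) - ∑ i : Fin k, ∑ p, M.Γ p σ (idx i) * T (Function.update idx i p)

/-- The second covariant derivative `(∇∇T)_{σ τ idx}` of a covariant `k`-tensor. -/
def covT2 (M : ChartModel n F) {k : ℕ} (T : (Fin k → Fin n) → F)
    (σ τ : Fin n) (idx : Fin k → Fin n) : F :=
  M.pd σ (M.covT T τ idx) - (∑ p, M.Γ p σ τ * M.covT T p idx)
    - ∑ i : Fin k, ∑ p, M.Γ p σ (idx i) * M.covT T τ (Function.update idx i p)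

/-- `f = (1/2) g(T,T)`, half the full metric contraction of `T` with itself. -/
noncomputable def halfNorm (M : ChartModel n F) {k : ℕ} (T : (Fin k → Fin n) → F) : F :=
  algebraMap ℝ F (1 / 2) *
    ∑ s : Fin k → Fin n, ∑ t : Fin k → Fin n, T s * T t * ∏ i, M.ginv (s i) (t i)

/-- The Hessian `Hess f (a,b) = ∂_a ∂_b f − Γ^ρ_{ab} ∂_ρ f` of a function `f`. -/
def hess (M : ChartModel n F) (f : F) (a b : Fin n) : F :=
  M.pd a (M.pd b f) - ∑ p, M.Γ p a b * M.pd p f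

end ChartModel

namespace ChartModel

variable {n : ℕ} {F : Type} [CommRing F] [Algebra ℝ F] (M : ChartModel n F)

lemma pd_zero (l : Fin n) : M.pd l 0 = 0 := by
  simpa using M.pd_const l 0

lemma pd_one (l : Fin n) : M.pd l 1 = 0 := by
  simpa using M.pd_const l 1

lemma pd_sum (l : Fin n) {ι : Type*} (s : Finset ι) (f : ι → F) :
    M.pd l (∑ x ∈ s, f x) = ∑ x ∈ s, M.pd l (f x) := by
  classical
  induction s using Finset.induction_on with
  | empty => simpa using M.pd_zero l
  | @insert a s ha ih => rw [Finset.sum_insert ha, Finset.sum_insert ha, M.pd_add, ih]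

lemma pd_neg (l : Fin n) (a : F) : M.pd l (-a) = -M.pd l a := by
  have h := M.pd_add l a (-a)
  rw [add_neg_cancel, M.pd_zero] at h
  exact (neg_eq_of_add_eq_zero_right h.symm).symm

lemma pd_sub (l : Fin n) (a b : F) : M.pd l (a - b) = M.pd l a - M.pd l b := by
  rw [sub_eq_add_neg, M.pd_add, M.pd_neg, ← sub_eq_add_neg]

lemma pd_prod (l : Fin n) {ι : Type*} [DecidableEq ι] (s : Finset ι) (f : ι → F) :
    M.pd l (∏ x ∈ s, f x) = ∑ x ∈ s, M.pd l (f x) * ∏ y ∈ s.erase x, f y := by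
  classical
  induction s using Finset.induction_on with
  | empty => simpa using M.pd_one l
  | @insert a s ha ih =>
    rw [Finset.prod_insert ha, M.pd_mul, ih, Finset.sum_insert ha,
      Finset.erase_insert ha, Finset.mul_sum]
    congr 1
    refine Finset.sum_congr rfl fun x hx => ?_
    rw [Finset.erase_insert_of_ne (fun h => ha (by rw [h]; exact hx)),
      Finset.prod_insert (fun h => ha (Finset.erase_subset _ _ h))]
    ring

/-- The full contraction product `∏ i, ginv (s i) (t i)`. -/
def Gp {k : ℕ} (s t : Fin k → Fin n) : F := ∏ i, M.ginv (s i) (t i)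

lemma Gp_symm {k : ℕ} (s t : Fin k → Fin n) : M.Gp s t = M.Gp t s := by
  unfold Gp; exact Finset.prod_congr rfl fun i _ => M.ginv_symm _ _

lemma sum_update {k : ℕ} (i : Fin k) (Φ : (Fin k → Fin n) → Fin n → F) :
    ∑ s : Fin k → Fin n, ∑ p, Φ (Function.update s i p) (s i)
      = ∑ s : Fin k → Fin n, ∑ p, Φ s p := by
  classical
  have h1 := Fintype.sum_prod_type
    (fun x : (Fin k → Fin n) × Fin n => Φ (Function.update x.1 i x.2) (x.1 i))
  have h2 := Fintype.sum_prod_type (fun x : (Fin k → Fin n) × Fin n => Φ x.1 x.2)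
  rw [← h1, ← h2]
  refine Fintype.sum_equiv
    (Equiv.mk (fun x : (Fin k → Fin n) × Fin n => (Function.update x.1 i x.2, x.1 i))
      (fun x => (Function.update x.1 i x.2, x.1 i)) ?_ ?_) _ _ (fun x => rfl)
  · rintro ⟨s, p⟩
    simp [Function.update_idem, Function.update_eq_self]
  · rintro ⟨s, p⟩
    simp [Function.update_idem, Function.update_eq_self]

end ChartModel

namespace ChartModel

variable {n : ℕ} {F : Type} [CommRing F] [Algebra ℝ F] (M : ChartModel n F)

lemma ginv_g_delta (a q : Fin n) :
    (∑ p, M.ginv a p * M.g p q) = if q = a then 1 else 0 := by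
  rw [← M.g_ginv q a]
  exact Finset.sum_congr rfl fun p _ => by rw [M.g_symm p q, M.ginv_symm a p]; ring

lemma pd_ginv (l c b : Fin n) :
    M.pd l (M.ginv c b) = -(∑ p, M.Γ c l p * M.ginv p b) - ∑ p, M.Γ b l p * M.ginv c p := by
  classical
  have h4 : ∀ a, M.Γ b l a + (∑ p, ∑ q, M.Γ q l p * M.g a q * M.ginv p b)
      + ∑ p, M.g a p * M.pd l (M.ginv p b) = 0 := by
    intro a
    have h1 : M.pd l (∑ p, M.g a p * M.ginv p b) = 0 := by
      rw [M.g_ginv a b]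
      by_cases h : a = b <;> simp [h, M.pd_one, M.pd_zero]
    rw [M.pd_sum] at h1
    have h2 : ∑ p, M.pd l (M.g a p * M.ginv p b)
        = ∑ p, ((M.pd l (M.g a p)) * M.ginv p b + M.g a p * M.pd l (M.ginv p b)) :=
      Finset.sum_congr rfl fun p _ => M.pd_mul l _ _
    have h3 : ∑ p, (M.pd l (M.g a p)) * M.ginv p b
        = M.Γ b l a + ∑ p, ∑ q, M.Γ q l p * M.g a q * M.ginv p b := by
      have e1 : ∀ p, (M.pd l (M.g a p)) * M.ginv p b
          = (∑ q, M.Γ q l a * M.g q p * M.ginv p b)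
            + ∑ q, M.Γ q l p * M.g a q * M.ginv p b := by
        intro p
        rw [M.Γ_metric l a p, add_mul, Finset.sum_mul, Finset.sum_mul]
      rw [Finset.sum_congr rfl fun p _ => e1 p, Finset.sum_add_distrib]
      congr 1
      rw [Finset.sum_comm]
      have e2 : ∀ q, (∑ p, M.Γ q l a * M.g q p * M.ginv p b)
          = M.Γ q l a * (if q = b then 1 else 0) := by
        intro q
        rw [← M.g_ginv q b, Finset.mul_sum]
        exact Finset.sum_congr rfl fun p _ => by ring
      rw [Finset.sum_congr rfl fun q _ => e2 q]
      simp
    rw [h2, Finset.sum_add_distrib, h3] at h1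
    linear_combination h1
  have h6 : (∑ a, M.ginv c a * M.Γ b l a)
      + (∑ a, M.ginv c a * ∑ p, ∑ q, M.Γ q l p * M.g a q * M.ginv p b)
      + (∑ a, M.ginv c a * ∑ p, M.g a p * M.pd l (M.ginv p b)) = 0 := by
    rw [← Finset.sum_add_distrib, ← Finset.sum_add_distrib]
    rw [Finset.sum_congr rfl fun a (_ : a ∈ Finset.univ) =>
      (by rw [← mul_add, ← mul_add, h4 a, mul_zero] :
        M.ginv c a * M.Γ b l a + M.ginv c a * (∑ p, ∑ q, M.Γ q l p * M.g a q * M.ginv p b)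
          + M.ginv c a * ∑ p, M.g a p * M.pd l (M.ginv p b) = 0)]
    simp
  have hB : (∑ a, M.ginv c a * ∑ p, ∑ q, M.Γ q l p * M.g a q * M.ginv p b)
      = ∑ p, M.Γ c l p * M.ginv p b := by
    calc (∑ a, M.ginv c a * ∑ p, ∑ q, M.Γ q l p * M.g a q * M.ginv p b)
        = ∑ a, ∑ p, ∑ q, M.Γ q l p * M.ginv p b * (M.ginv c a * M.g a q) := by
          refine Finset.sum_congr rfl fun a _ => ?_
          rw [Finset.mul_sum]
          refine Finset.sum_congr rfl fun p _ => ?_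
          rw [Finset.mul_sum]
          exact Finset.sum_congr rfl fun q _ => by ring
      _ = ∑ p, ∑ q, M.Γ q l p * M.ginv p b * ∑ a, M.ginv c a * M.g a q := by
          rw [Finset.sum_comm]
          refine Finset.sum_congr rfl fun p _ => ?_
          rw [Finset.sum_comm]
          exact Finset.sum_congr rfl fun q _ => by rw [← Finset.mul_sum]
      _ = ∑ p, M.Γ c l p * M.ginv p b := by
          refine Finset.sum_congr rfl fun p _ => ?_
          simp [M.ginv_g_delta]
  have hC : (∑ a, M.ginv c a * ∑ p, M.g a p * M.pd l (M.ginv p b))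
      = M.pd l (M.ginv c b) := by
    calc (∑ a, M.ginv c a * ∑ p, M.g a p * M.pd l (M.ginv p b))
        = ∑ a, ∑ p, M.pd l (M.ginv p b) * (M.ginv c a * M.g a p) := by
          refine Finset.sum_congr rfl fun a _ => ?_
          rw [Finset.mul_sum]
          exact Finset.sum_congr rfl fun p _ => by ring
      _ = ∑ p, M.pd l (M.ginv p b) * ∑ a, M.ginv c a * M.g a p := by
          rw [Finset.sum_comm]
          exact Finset.sum_congr rfl fun p _ => by rw [← Finset.mul_sum]
      _ = M.pd l (M.ginv c b) := by simp [M.ginv_g_delta]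
  have hA : (∑ a, M.ginv c a * M.Γ b l a) = ∑ p, M.Γ b l p * M.ginv c p :=
    Finset.sum_congr rfl fun a _ => by ring
  rw [hA, hB, hC] at h6
  linear_combination h6

end ChartModel

namespace ChartModel

variable {n : ℕ} {F : Type} [CommRing F] [Algebra ℝ F] (M : ChartModel n F)

set_option maxHeartbeats 1000000 in
lemma pd_contract {k : ℕ} (l : Fin n) (A B : (Fin k → Fin n) → F) :
    M.pd l (∑ s : Fin k → Fin n, ∑ t : Fin k → Fin n, A s * B t * M.Gp s t)
      = ∑ s : Fin k → Fin n, ∑ t : Fin k → Fin n,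
          (M.covT A l s * B t + A s * M.covT B l t) * M.Gp s t := by
  classical
  have hpdG : ∀ s t : Fin k → Fin n, M.pd l (M.Gp s t)
      = ∑ i, (-(∑ p, M.Γ (s i) l p * M.ginv p (t i))
          - ∑ p, M.Γ (t i) l p * M.ginv (s i) p)
          * ∏ j ∈ Finset.univ.erase i, M.ginv (s j) (t j) := by
    intro s t
    rw [Gp, M.pd_prod]
    exact Finset.sum_congr rfl fun i _ => by rw [M.pd_ginv]
  have expand : M.pd l (∑ s : Fin k → Fin n, ∑ t : Fin k → Fin n, A s * B t * M.Gp s t)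
      = (∑ s : Fin k → Fin n, ∑ t : Fin k → Fin n,
          (M.pd l (A s) * B t + A s * M.pd l (B t)) * M.Gp s t)
        + ∑ s : Fin k → Fin n, ∑ t : Fin k → Fin n, A s * B t * M.pd l (M.Gp s t) := by
    rw [M.pd_sum, ← Finset.sum_add_distrib]
    refine Finset.sum_congr rfl fun s _ => ?_
    rw [M.pd_sum, ← Finset.sum_add_distrib]
    refine Finset.sum_congr rfl fun t _ => ?_
    rw [M.pd_mul, M.pd_mul]
  have hcov : ∀ s t : Fin k → Fin n,
      (M.covT A l s * B t + A s * M.covT B l t) * M.Gp s t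
        = (M.pd l (A s) * B t + A s * M.pd l (B t)) * M.Gp s t
          - (∑ i, ∑ p, M.Γ p l (s i) * A (Function.update s i p)) * B t * M.Gp s t
          - A s * (∑ i, ∑ p, M.Γ p l (t i) * B (Function.update t i p)) * M.Gp s t := by
    intro s t
    rw [covT, covT]
    ring
  have key1 : ∀ (i : Fin k) (t : Fin k → Fin n),
      (∑ s : Fin k → Fin n, ∑ p, M.Γ p l (s i) * A (Function.update s i p) * B t * M.Gp s t)
        = ∑ s : Fin k → Fin n, (∑ p, M.Γ (s i) l p * M.ginv p (t i))
            * (∏ j ∈ Finset.univ.erase i, M.ginv (s j) (t j)) * (A s * B t) := by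
    intro i t
    have hst := sum_update (F := F) i (fun s p => M.Γ (s i) l p * M.ginv p (t i)
        * (∏ j ∈ Finset.univ.erase i, M.ginv (s j) (t j)) * A s * B t)
    calc (∑ s : Fin k → Fin n, ∑ p, M.Γ p l (s i) * A (Function.update s i p) * B t * M.Gp s t)
        = ∑ s : Fin k → Fin n, ∑ p,
            M.Γ ((Function.update s i p) i) l (s i) * M.ginv (s i) (t i)
              * (∏ j ∈ Finset.univ.erase i, M.ginv ((Function.update s i p) j) (t j))
              * A (Function.update s i p) * B t := by
          refine Finset.sum_congr rfl fun s _ => Finset.sum_congr rfl fun p _ => ?_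
          rw [Function.update_self,
            Finset.prod_congr rfl (fun j hj => by
              rw [Function.update_of_ne (Finset.ne_of_mem_erase hj)]),
            Gp, ← Finset.mul_prod_erase Finset.univ _ (Finset.mem_univ i)]
          ring
      _ = ∑ s : Fin k → Fin n, ∑ p, M.Γ (s i) l p * M.ginv p (t i)
            * (∏ j ∈ Finset.univ.erase i, M.ginv (s j) (t j)) * A s * B t := hst
      _ = ∑ s : Fin k → Fin n, (∑ p, M.Γ (s i) l p * M.ginv p (t i))
            * (∏ j ∈ Finset.univ.erase i, M.ginv (s j) (t j)) * (A s * B t) := by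
          refine Finset.sum_congr rfl fun s _ => ?_
          rw [Finset.sum_mul, Finset.sum_mul]
          exact Finset.sum_congr rfl fun p _ => by ring
  have key2 : ∀ (i : Fin k) (s : Fin k → Fin n),
      (∑ t : Fin k → Fin n, ∑ p, M.Γ p l (t i) * B (Function.update t i p) * A s * M.Gp s t)
        = ∑ t : Fin k → Fin n, (∑ p, M.Γ (t i) l p * M.ginv (s i) p)
            * (∏ j ∈ Finset.univ.erase i, M.ginv (s j) (t j)) * (A s * B t) := by
    intro i s
    have hst := sum_update (F := F) i (fun t p => M.Γ (t i) l p * M.ginv (s i) p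
        * (∏ j ∈ Finset.univ.erase i, M.ginv (s j) (t j)) * B t * A s)
    calc (∑ t : Fin k → Fin n, ∑ p, M.Γ p l (t i) * B (Function.update t i p) * A s * M.Gp s t)
        = ∑ t : Fin k → Fin n, ∑ p,
            M.Γ ((Function.update t i p) i) l (t i) * M.ginv (s i) (t i)
              * (∏ j ∈ Finset.univ.erase i, M.ginv (s j) ((Function.update t i p) j))
              * B (Function.update t i p) * A s := by
          refine Finset.sum_congr rfl fun t _ => Finset.sum_congr rfl fun p _ => ?_
          rw [Function.update_self,
            Finset.prod_congr rfl (fun j hj => by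
              rw [Function.update_of_ne (Finset.ne_of_mem_erase hj)]),
            Gp, ← Finset.mul_prod_erase Finset.univ _ (Finset.mem_univ i)]
          ring
      _ = ∑ t : Fin k → Fin n, ∑ p, M.Γ (t i) l p * M.ginv (s i) p
            * (∏ j ∈ Finset.univ.erase i, M.ginv (s j) (t j)) * B t * A s := hst
      _ = ∑ t : Fin k → Fin n, (∑ p, M.Γ (t i) l p * M.ginv (s i) p)
            * (∏ j ∈ Finset.univ.erase i, M.ginv (s j) (t j)) * (A s * B t) := by
          refine Finset.sum_congr rfl fun t _ => ?_
          rw [Finset.sum_mul, Finset.sum_mul]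
          exact Finset.sum_congr rfl fun p _ => by ring
  have hY : (∑ s : Fin k → Fin n, ∑ t : Fin k → Fin n,
        (∑ i, ∑ p, M.Γ p l (s i) * A (Function.update s i p)) * B t * M.Gp s t)
      = ∑ s : Fin k → Fin n, ∑ t : Fin k → Fin n, ∑ i,
          (∑ p, M.Γ (s i) l p * M.ginv p (t i))
            * (∏ j ∈ Finset.univ.erase i, M.ginv (s j) (t j)) * (A s * B t) := by
    calc (∑ s : Fin k → Fin n, ∑ t : Fin k → Fin n,
          (∑ i, ∑ p, M.Γ p l (s i) * A (Function.update s i p)) * B t * M.Gp s t)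
        = ∑ s : Fin k → Fin n, ∑ t : Fin k → Fin n, ∑ i, ∑ p,
            M.Γ p l (s i) * A (Function.update s i p) * B t * M.Gp s t := by
          refine Finset.sum_congr rfl fun s _ => Finset.sum_congr rfl fun t _ => ?_
          rw [Finset.sum_mul, Finset.sum_mul]
          exact Finset.sum_congr rfl fun i _ => by rw [Finset.sum_mul, Finset.sum_mul]
      _ = ∑ t : Fin k → Fin n, ∑ i, ∑ s : Fin k → Fin n, ∑ p,
            M.Γ p l (s i) * A (Function.update s i p) * B t * M.Gp s t := by
          rw [Finset.sum_comm]
          exact Finset.sum_congr rfl fun t _ => Finset.sum_comm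
      _ = ∑ t : Fin k → Fin n, ∑ i, ∑ s : Fin k → Fin n,
            (∑ p, M.Γ (s i) l p * M.ginv p (t i))
              * (∏ j ∈ Finset.univ.erase i, M.ginv (s j) (t j)) * (A s * B t) :=
          Finset.sum_congr rfl fun t _ => Finset.sum_congr rfl fun i _ => key1 i t
      _ = ∑ s : Fin k → Fin n, ∑ t : Fin k → Fin n, ∑ i,
            (∑ p, M.Γ (s i) l p * M.ginv p (t i))
              * (∏ j ∈ Finset.univ.erase i, M.ginv (s j) (t j)) * (A s * B t) := by
          rw [Finset.sum_congr rfl fun (t : Fin k → Fin n) (_ : t ∈ Finset.univ) =>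
            (Finset.sum_comm :
              (∑ i, ∑ s : Fin k → Fin n, (∑ p, M.Γ (s i) l p * M.ginv p (t i))
                * (∏ j ∈ Finset.univ.erase i, M.ginv (s j) (t j)) * (A s * B t))
              = _)]
          exact Finset.sum_comm
  have hZ : (∑ s : Fin k → Fin n, ∑ t : Fin k → Fin n,
        A s * (∑ i, ∑ p, M.Γ p l (t i) * B (Function.update t i p)) * M.Gp s t)
      = ∑ s : Fin k → Fin n, ∑ t : Fin k → Fin n, ∑ i,
          (∑ p, M.Γ (t i) l p * M.ginv (s i) p)
            * (∏ j ∈ Finset.univ.erase i, M.ginv (s j) (t j)) * (A s * B t) := by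
    refine Finset.sum_congr rfl fun s _ => ?_
    calc (∑ t : Fin k → Fin n,
          A s * (∑ i, ∑ p, M.Γ p l (t i) * B (Function.update t i p)) * M.Gp s t)
        = ∑ t : Fin k → Fin n, ∑ i, ∑ p,
            M.Γ p l (t i) * B (Function.update t i p) * A s * M.Gp s t := by
          refine Finset.sum_congr rfl fun t _ => ?_
          rw [Finset.mul_sum, Finset.sum_mul]
          refine Finset.sum_congr rfl fun i _ => ?_
          rw [Finset.mul_sum, Finset.sum_mul]
          exact Finset.sum_congr rfl fun p _ => by ring
      _ = ∑ i, ∑ t : Fin k → Fin n, ∑ p,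
            M.Γ p l (t i) * B (Function.update t i p) * A s * M.Gp s t := Finset.sum_comm
      _ = ∑ i, ∑ t : Fin k → Fin n,
            (∑ p, M.Γ (t i) l p * M.ginv (s i) p)
              * (∏ j ∈ Finset.univ.erase i, M.ginv (s j) (t j)) * (A s * B t) :=
          Finset.sum_congr rfl fun i _ => key2 i s
      _ = ∑ t : Fin k → Fin n, ∑ i,
            (∑ p, M.Γ (t i) l p * M.ginv (s i) p)
              * (∏ j ∈ Finset.univ.erase i, M.ginv (s j) (t j)) * (A s * B t) :=
          Finset.sum_comm
  have hfin : ∀ s t : Fin k → Fin n, A s * B t * M.pd l (M.Gp s t)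
      + (∑ i, (∑ p, M.Γ (s i) l p * M.ginv p (t i))
          * (∏ j ∈ Finset.univ.erase i, M.ginv (s j) (t j)) * (A s * B t))
      + (∑ i, (∑ p, M.Γ (t i) l p * M.ginv (s i) p)
          * (∏ j ∈ Finset.univ.erase i, M.ginv (s j) (t j)) * (A s * B t)) = 0 := by
    intro s t
    rw [hpdG s t, Finset.mul_sum, ← Finset.sum_add_distrib, ← Finset.sum_add_distrib]
    exact Finset.sum_eq_zero fun i _ => by ring
  have h0 : (∑ s : Fin k → Fin n, ∑ t : Fin k → Fin n, A s * B t * M.pd l (M.Gp s t))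
      + (∑ s : Fin k → Fin n, ∑ t : Fin k → Fin n, ∑ i,
          (∑ p, M.Γ (s i) l p * M.ginv p (t i))
            * (∏ j ∈ Finset.univ.erase i, M.ginv (s j) (t j)) * (A s * B t))
      + (∑ s : Fin k → Fin n, ∑ t : Fin k → Fin n, ∑ i,
          (∑ p, M.Γ (t i) l p * M.ginv (s i) p)
            * (∏ j ∈ Finset.univ.erase i, M.ginv (s j) (t j)) * (A s * B t)) = 0 := by
    rw [← Finset.sum_add_distrib, ← Finset.sum_add_distrib]
    refine Finset.sum_eq_zero fun s _ => ?_
    rw [← Finset.sum_add_distrib, ← Finset.sum_add_distrib]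
    exact Finset.sum_eq_zero fun t _ => hfin s t
  have hsplit : (∑ s : Fin k → Fin n, ∑ t : Fin k → Fin n,
        (M.covT A l s * B t + A s * M.covT B l t) * M.Gp s t)
      = (∑ s : Fin k → Fin n, ∑ t : Fin k → Fin n,
          (M.pd l (A s) * B t + A s * M.pd l (B t)) * M.Gp s t)
        - (∑ s : Fin k → Fin n, ∑ t : Fin k → Fin n,
            (∑ i, ∑ p, M.Γ p l (s i) * A (Function.update s i p)) * B t * M.Gp s t)
        - ∑ s : Fin k → Fin n, ∑ t : Fin k → Fin n,
            A s * (∑ i, ∑ p, M.Γ p l (t i) * B (Function.update t i p)) * M.Gp s t := by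
    rw [← Finset.sum_sub_distrib, ← Finset.sum_sub_distrib]
    refine Finset.sum_congr rfl fun s _ => ?_
    rw [← Finset.sum_sub_distrib, ← Finset.sum_sub_distrib]
    exact Finset.sum_congr rfl fun t _ => hcov s t
  rw [expand, hsplit]
  linear_combination h0 + hY + hZ

end ChartModel

namespace ChartModel

variable {n : ℕ} {F : Type} [CommRing F] [Algebra ℝ F] (M : ChartModel n F)

lemma sum_comm3 {α β γ : Type*} [Fintype α] [Fintype β] [Fintype γ]
    (f : α → β → γ → F) :
    ∑ a, ∑ b, ∑ c, f a b c = ∑ c, ∑ a, ∑ b, f a b c := by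
  rw [Finset.sum_congr rfl fun (a : α) (_ : a ∈ Finset.univ) =>
    (Finset.sum_comm : (∑ b, ∑ c, f a b c) = ∑ c, ∑ b, f a b c)]
  exact Finset.sum_comm

lemma contract_swap {k : ℕ} (A B : (Fin k → Fin n) → F) :
    (∑ s : Fin k → Fin n, ∑ t : Fin k → Fin n, A s * B t * M.Gp s t)
      = ∑ s : Fin k → Fin n, ∑ t : Fin k → Fin n, B s * A t * M.Gp s t := by
  rw [Finset.sum_comm]
  refine Finset.sum_congr rfl fun t _ => Finset.sum_congr rfl fun s _ => ?_
  rw [M.Gp_symm]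
  ring

lemma pull_const {k : ℕ} (c : Fin n → F) (W : Fin n → (Fin k → Fin n) → F)
    (B : (Fin k → Fin n) → F) :
    (∑ s : Fin k → Fin n, ∑ t : Fin k → Fin n, (∑ p, c p * W p s) * B t * M.Gp s t)
      = ∑ p, c p * ∑ s : Fin k → Fin n, ∑ t : Fin k → Fin n, W p s * B t * M.Gp s t := by
  calc (∑ s : Fin k → Fin n, ∑ t : Fin k → Fin n, (∑ p, c p * W p s) * B t * M.Gp s t)
      = ∑ s : Fin k → Fin n, ∑ t : Fin k → Fin n, ∑ p, c p * (W p s * B t * M.Gp s t) := by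
        refine Finset.sum_congr rfl fun s _ => Finset.sum_congr rfl fun t _ => ?_
        rw [Finset.sum_mul, Finset.sum_mul]
        exact Finset.sum_congr rfl fun p _ => by ring
    _ = ∑ p, ∑ s : Fin k → Fin n, ∑ t : Fin k → Fin n, c p * (W p s * B t * M.Gp s t) :=
        sum_comm3 _
    _ = ∑ p, c p * ∑ s : Fin k → Fin n, ∑ t : Fin k → Fin n, W p s * B t * M.Gp s t := by
        simp only [← Finset.mul_sum]

lemma pull_const' {k : ℕ} (c : Fin n → F) (A : (Fin k → Fin n) → F)
    (W : Fin n → (Fin k → Fin n) → F) :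
    (∑ s : Fin k → Fin n, ∑ t : Fin k → Fin n, A s * (∑ p, c p * W p t) * M.Gp s t)
      = ∑ p, c p * ∑ s : Fin k → Fin n, ∑ t : Fin k → Fin n, A s * W p t * M.Gp s t := by
  calc (∑ s : Fin k → Fin n, ∑ t : Fin k → Fin n, A s * (∑ p, c p * W p t) * M.Gp s t)
      = ∑ s : Fin k → Fin n, ∑ t : Fin k → Fin n, ∑ p, c p * (A s * W p t * M.Gp s t) := by
        refine Finset.sum_congr rfl fun s _ => Finset.sum_congr rfl fun t _ => ?_
        rw [Finset.mul_sum, Finset.sum_mul]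
        exact Finset.sum_congr rfl fun p _ => by ring
    _ = ∑ p, ∑ s : Fin k → Fin n, ∑ t : Fin k → Fin n, c p * (A s * W p t * M.Gp s t) :=
        sum_comm3 _
    _ = ∑ p, c p * ∑ s : Fin k → Fin n, ∑ t : Fin k → Fin n, A s * W p t * M.Gp s t := by
        simp only [← Finset.mul_sum]

lemma pd_halfNorm {k : ℕ} (T : (Fin k → Fin n) → F) (a : Fin n) :
    M.pd a (M.halfNorm T)
      = ∑ s : Fin k → Fin n, ∑ t : Fin k → Fin n, M.covT T a s * T t * M.Gp s t := by
  have hf : M.halfNorm T = algebraMap ℝ F (1 / 2)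
      * ∑ s : Fin k → Fin n, ∑ t : Fin k → Fin n, T s * T t * M.Gp s t := rfl
  rw [hf, M.pd_mul, M.pd_const, zero_mul, zero_add, M.pd_contract]
  have hsw : (∑ s : Fin k → Fin n, ∑ t : Fin k → Fin n, T s * M.covT T a t * M.Gp s t)
      = ∑ s : Fin k → Fin n, ∑ t : Fin k → Fin n, M.covT T a s * T t * M.Gp s t :=
    M.contract_swap T (M.covT T a)
  have hsplit : (∑ s : Fin k → Fin n, ∑ t : Fin k → Fin n,
        (M.covT T a s * T t + T s * M.covT T a t) * M.Gp s t)
      = (∑ s : Fin k → Fin n, ∑ t : Fin k → Fin n, M.covT T a s * T t * M.Gp s t)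
        + ∑ s : Fin k → Fin n, ∑ t : Fin k → Fin n, T s * M.covT T a t * M.Gp s t := by
    rw [← Finset.sum_add_distrib]
    refine Finset.sum_congr rfl fun s _ => ?_
    rw [← Finset.sum_add_distrib]
    exact Finset.sum_congr rfl fun t _ => by ring
  rw [hsplit, hsw, ← two_mul, ← mul_assoc]
  have h1 : algebraMap ℝ F (1 / 2) * 2 = 1 := by
    rw [show (2 : F) = algebraMap ℝ F 2 from (map_ofNat (algebraMap ℝ F) 2).symm, ← map_mul]
    norm_num
  rw [h1, one_mul]

lemma covT_covT {k : ℕ} (T : (Fin k → Fin n) → F)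
    (h2 : ∀ σ τ idx, M.covT2 T σ τ idx = 0) (a b : Fin n) (s : Fin k → Fin n) :
    M.covT (M.covT T b) a s = ∑ p, M.Γ p a b * M.covT T p s := by
  have h := h2 a b s
  rw [covT2] at h
  rw [covT]
  linear_combination h

lemma hess_eq {k : ℕ} (T : (Fin k → Fin n) → F)
    (h2 : ∀ σ τ idx, M.covT2 T σ τ idx = 0) (a b : Fin n) :
    M.hess (M.halfNorm T) a b
      = ∑ s : Fin k → Fin n, ∑ t : Fin k → Fin n,
          M.covT T a s * M.covT T b t * M.Gp s t := by
  rw [hess, M.pd_halfNorm T b, M.pd_contract]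
  have hsplit : (∑ s : Fin k → Fin n, ∑ t : Fin k → Fin n,
        (M.covT (M.covT T b) a s * T t + M.covT T b s * M.covT T a t) * M.Gp s t)
      = (∑ s : Fin k → Fin n, ∑ t : Fin k → Fin n,
          (∑ p, M.Γ p a b * M.covT T p s) * T t * M.Gp s t)
        + ∑ s : Fin k → Fin n, ∑ t : Fin k → Fin n,
            M.covT T b s * M.covT T a t * M.Gp s t := by
    rw [← Finset.sum_add_distrib]
    refine Finset.sum_congr rfl fun s _ => ?_
    rw [← Finset.sum_add_distrib]
    refine Finset.sum_congr rfl fun t _ => ?_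
    rw [M.covT_covT T h2 a b s]
    ring
  rw [hsplit, M.pull_const (fun p => M.Γ p a b) (fun p s => M.covT T p s) T,
    M.contract_swap (M.covT T b) (M.covT T a)]
  have hpd : ∀ p, (∑ s : Fin k → Fin n, ∑ t : Fin k → Fin n, M.covT T p s * T t * M.Gp s t)
      = M.pd p (M.halfNorm T) := fun p => (M.pd_halfNorm T p).symm
  simp only [hpd]
  ring

lemma hess_parallel {k : ℕ} (T : (Fin k → Fin n) → F)
    (h2 : ∀ σ τ idx, M.covT2 T σ τ idx = 0) (σ a b : Fin n) :
    M.pd σ (M.hess (M.halfNorm T) a b)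
        - (∑ p, M.Γ p σ a * M.hess (M.halfNorm T) p b)
        - (∑ p, M.Γ p σ b * M.hess (M.halfNorm T) a p) = 0 := by
  have he := M.hess_eq T h2
  rw [he a b, M.pd_contract]
  have e1 : (∑ s : Fin k → Fin n, ∑ t : Fin k → Fin n,
        (M.covT (M.covT T a) σ s * M.covT T b t
          + M.covT T a s * M.covT (M.covT T b) σ t) * M.Gp s t)
      = (∑ s : Fin k → Fin n, ∑ t : Fin k → Fin n,
          (∑ p, M.Γ p σ a * M.covT T p s) * M.covT T b t * M.Gp s t)
        + ∑ s : Fin k → Fin n, ∑ t : Fin k → Fin n,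
            M.covT T a s * (∑ p, M.Γ p σ b * M.covT T p t) * M.Gp s t := by
    rw [← Finset.sum_add_distrib]
    refine Finset.sum_congr rfl fun s _ => ?_
    rw [← Finset.sum_add_distrib]
    refine Finset.sum_congr rfl fun t _ => ?_
    rw [M.covT_covT T h2 σ a s, M.covT_covT T h2 σ b t]
    ring
  rw [e1, M.pull_const (fun p => M.Γ p σ a) (fun p s => M.covT T p s) (M.covT T b),
    M.pull_const' (fun p => M.Γ p σ b) (M.covT T a) (fun p t => M.covT T p t)]
  simp only [he]
  ring

end ChartModel

open ChartModel

/-- If `T` is a nonzero tensor field with vanishing second covariant derivative,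
and `f := (1/2) g(T,T)`, then `Hess f` is a parallel symmetric 2-tensor field
(`∇ Hess f = 0`) and `Hess f (Y,Z) = g(∇_Y T, ∇_Z T)`. -/
theorem stmt17 {n : ℕ} {F : Type} [CommRing F] [Algebra ℝ F]
    (M : ChartModel n F) {k : ℕ} (T : (Fin k → Fin n) → F) (hT : T ≠ 0)
    (h2 : ∀ σ τ idx, covT2 M T σ τ idx = 0) :
    (∀ σ a b, M.pd σ (hess M (halfNorm M T) a b)
        - (∑ p, M.Γ p σ a * hess M (halfNorm M T) p b)
        - (∑ p, M.Γ p σ b * hess M (halfNorm M T) a p) = 0) ∧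
    (∀ a b, hess M (halfNorm M T) a b =
        ∑ s : Fin k → Fin n, ∑ t : Fin k → Fin n,
          covT M T a s * covT M T b t * ∏ i, M.ginv (s i) (t i)) := by
  exact ⟨fun σ a b => M.hess_parallel T h2 σ a b, fun a b => M.hess_eq T h2 a b⟩
end
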